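/- arXiv:2406.03424 — 6 statements merged into one kernel-verified Lean document; each statement's English description precedes it below -/
import Mathlib

section
/- Fix integers n ≥ 1, L ≥ 2 and d ≥ 0. Let x₁, …, x_n be i.i.d. uniform (Haar) on the complex unit circle U(1) = {z ∈ ℂ : |z| = 1}, and let y₁, …, y_n be i.i.d. uniform on the set μ_L = {e^{2πik/L} : k = 0, …, L−1} of L-th roots of unity. Then E[(Σ_{ℓ=1}^{L} |Σ_{j=1}^{n} x_j^ℓ|²)^d] ≤ E[(Σ_{ℓ=1}^{L} |Σ_{j=1}^{n} y_j^ℓ|²)^d]. -/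
/-!
Expanding the `d`-th power, `(∑_ℓ |∑_j x_j^ℓ|²)^d` is a sum, with all coefficients `1`, of
monomials `∏_j x_j^{a_j} * conj(x_j)^{b_j}`. For i.i.d. coordinates the expectation of such a
monomial is the product of the one-variable mixed moments `E[z^a * conj(z)^b]`. These are
`[a = b]` for the uniform measure on the circle and `[L ∣ a - b]` for the uniform measure on the
`L`-th roots of unity, so the circle moments are nonnegative and termwise dominated by the cyclic
ones.
-/

open MeasureTheory Filter Real
open scoped ENNReal ComplexOrder ComplexConjugate

section Expansion

variable {ι κ : Type*} [Fintype ι]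

def fiberSum [DecidableEq κ] (g : ι → κ) (e : ι → ℕ) (k : κ) : ℕ := ∑ i with g i = k, e i

theorem prod_pow_eq_prod_pow_fiberSum {M : Type*} [CommMonoid M] [Fintype κ] [DecidableEq κ]
    (y : κ → M) (g : ι → κ) (e : ι → ℕ) :
    ∏ i, y (g i) ^ e i = ∏ k, y k ^ fiberSum g e k := by
  rw [← Finset.prod_fiberwise Finset.univ g]
  refine Finset.prod_congr rfl fun k _ => ?_
  rw [fiberSum, ← Finset.prod_pow_eq_pow_sum]
  exact Finset.prod_congr rfl fun i hi => by rw [(Finset.mem_filter.mp hi).2]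

def conjMonomial (a b : ι → ℕ) (x : ι → ℂ) : ℂ := ∏ j, x j ^ a j * conj (x j) ^ b j

noncomputable def powerSumNormSq (S : Finset ℕ) (x : ι → ℂ) : ℝ := ∑ ℓ ∈ S, ‖∑ j, x j ^ ℓ‖ ^ 2

theorem ofReal_powerSumNormSq (S : Finset ℕ) (x : ι → ℂ) :
    (powerSumNormSq S x : ℂ) = ∑ t ∈ S ×ˢ (Finset.univ : Finset (ι × ι)),
      x t.2.1 ^ t.1 * conj (x t.2.2) ^ t.1 := by
  rw [powerSumNormSq, Finset.sum_product]
  push_cast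
  refine Finset.sum_congr rfl fun ℓ _ => ?_
  rw [← Complex.mul_conj', map_sum, Finset.sum_mul_sum, ← Finset.univ_product_univ,
    Finset.sum_product]
  simp only [map_pow]

variable [DecidableEq ι]

theorem ofReal_powerSumNormSq_pow (S : Finset ℕ) (d : ℕ) (x : ι → ℂ) :
    ((powerSumNormSq S x ^ d : ℝ) : ℂ) =
      ∑ p ∈ Fintype.piFinset fun _ : Fin d => S ×ˢ (Finset.univ : Finset (ι × ι)),
        conjMonomial (fiberSum (fun i => (p i).2.1) (fun i => (p i).1))
          (fiberSum (fun i => (p i).2.2) (fun i => (p i).1)) x := by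
  rw [Complex.ofReal_pow, ofReal_powerSumNormSq, Finset.sum_pow']
  refine Finset.sum_congr rfl fun p _ => ?_
  rw [Finset.prod_mul_distrib, prod_pow_eq_prod_pow_fiberSum x,
    prod_pow_eq_prod_pow_fiberSum (fun j => conj (x j)), conjMonomial, Finset.prod_mul_distrib]

end Expansion

section Moments

noncomputable def mixedMoment (μ : Measure ℂ) (a b : ℕ) : ℂ := ∫ z, z ^ a * conj z ^ b ∂μ

variable {ι : Type*} [Fintype ι] (μ : Measure ℂ)

theorem integral_conjMonomial [SigmaFinite μ] (a b : ι → ℕ) :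
    ∫ x, conjMonomial a b x ∂Measure.pi (fun _ => μ) = ∏ j, mixedMoment μ (a j) (b j) :=
  integral_fintype_prod_eq_prod (fun j z => z ^ a j * conj z ^ b j)

variable [IsFiniteMeasure μ]

theorem integrable_pow_mul_conj_pow (hμ : ∀ᵐ z ∂μ, ‖z‖ ≤ 1) (a b : ℕ) :
    Integrable (fun z : ℂ => z ^ a * conj z ^ b) μ := by
  refine Integrable.mono' (integrable_const 1) (by fun_prop) ?_
  filter_upwards [hμ] with z hz
  rw [norm_mul, norm_pow, norm_pow, Complex.norm_conj]
  exact mul_le_one₀ (pow_le_one₀ (norm_nonneg z) hz) (by positivity)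
    (pow_le_one₀ (norm_nonneg z) hz)

theorem integrable_conjMonomial (hμ : ∀ᵐ z ∂μ, ‖z‖ ≤ 1) (a b : ι → ℕ) :
    Integrable (conjMonomial a b) (Measure.pi fun _ => μ) :=
  Integrable.fintype_prod fun j => integrable_pow_mul_conj_pow μ hμ (a j) (b j)

variable [DecidableEq ι]

theorem ofReal_integral_powerSumNormSq_pow (hμ : ∀ᵐ z ∂μ, ‖z‖ ≤ 1) (S : Finset ℕ) (d : ℕ) :
    ((∫ x, powerSumNormSq S x ^ d ∂Measure.pi (fun _ : ι => μ) : ℝ) : ℂ) =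
      ∑ p ∈ Fintype.piFinset fun _ : Fin d => S ×ˢ (Finset.univ : Finset (ι × ι)),
        ∏ j, mixedMoment μ (fiberSum (fun i => (p i).2.1) (fun i => (p i).1) j)
          (fiberSum (fun i => (p i).2.2) (fun i => (p i).1) j) := by
  rw [← integral_complex_ofReal]
  simp_rw [ofReal_powerSumNormSq_pow]
  rw [integral_finsetSum _ fun p _ => integrable_conjMonomial μ hμ _ _]
  simp_rw [integral_conjMonomial]

theorem integral_powerSumNormSq_pow_le (ν : Measure ℂ) [IsFiniteMeasure ν]
    (hμ : ∀ᵐ z ∂μ, ‖z‖ ≤ 1) (hν : ∀ᵐ z ∂ν, ‖z‖ ≤ 1)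
    (h0 : ∀ a b, 0 ≤ mixedMoment μ a b) (hle : ∀ a b, mixedMoment μ a b ≤ mixedMoment ν a b)
    (S : Finset ℕ) (d : ℕ) :
    ∫ x, powerSumNormSq S x ^ d ∂Measure.pi (fun _ : ι => μ) ≤
      ∫ x, powerSumNormSq S x ^ d ∂Measure.pi (fun _ : ι => ν) := by
  rw [← Complex.real_le_real, ofReal_integral_powerSumNormSq_pow μ hμ,
    ofReal_integral_powerSumNormSq_pow ν hν]
  exact Finset.sum_le_sum fun p _ =>
    Finset.prod_le_prod (fun j _ => h0 _ _) fun j _ => hle _ _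

end Moments

theorem pow_mul_conj_pow_of_norm_eq_one {𝕜 : Type*} [RCLike 𝕜] {z : 𝕜} (hz : ‖z‖ = 1)
    (a b : ℕ) : z ^ a * conj z ^ b = z ^ ((a : ℤ) - b) := by
  have hz0 : z ≠ 0 := norm_ne_zero_iff.mp (by rw [hz]; exact one_ne_zero)
  rw [← RCLike.inv_eq_conj hz, inv_pow, zpow_sub₀ hz0, zpow_natCast, zpow_natCast,
    div_eq_mul_inv]

noncomputable def circleUniform : Measure ℂ :=
  Measure.map (fun t : ℝ => Complex.exp (Complex.I * (t : ℂ)))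
    ((ENNReal.ofReal (2 * π))⁻¹ • volume.restrict (Set.Ico 0 (2 * π)))

theorem ae_norm_circleUniform : ∀ᵐ z ∂circleUniform, ‖z‖ = 1 := by
  rw [circleUniform, ae_map_iff (by fun_prop) (measurableSet_eq_fun (by fun_prop) (by fun_prop))]
  exact Eventually.of_forall fun t => by simp [Complex.norm_exp]

theorem mixedMoment_circleUniform (a b : ℕ) :
    mixedMoment circleUniform a b = if a = b then 1 else 0 := by
  have hexp (t : ℝ) : Complex.exp (Complex.I * t) ^ a * conj (Complex.exp (Complex.I * t)) ^ b
      = Complex.exp (((a : ℤ) - b : ℤ) * Complex.I * t) := by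
    rw [pow_mul_conj_pow_of_norm_eq_one (by simp [Complex.norm_exp]), ← Complex.exp_int_mul,
      mul_assoc]
  rw [mixedMoment, circleUniform, integral_map (by fun_prop) (by fun_prop), integral_smul_measure]
  simp_rw [hexp]
  rw [Measure.restrict_congr_set Ico_ae_eq_Ioc, ← intervalIntegral.integral_of_le two_pi_pos.le]
  split_ifs with hab
  · subst hab
    simp [ENNReal.toReal_ofReal pi_pos.le]
    field_simp
  · have hm : (((a : ℤ) - b : ℤ) : ℂ) * Complex.I ≠ 0 := by
      simpa [sub_eq_zero] using hab
    have hperiod : Complex.exp ((((a : ℤ) - b : ℤ) : ℂ) * Complex.I * (2 * π : ℝ)) = 1 :=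
      Complex.exp_eq_one_iff.mpr ⟨(a : ℤ) - b, by push_cast; ring⟩
    rw [integral_exp_mul_complex hm, hperiod]
    simp

noncomputable def rootsOfUnityUniform (L : ℕ) : Measure ℂ :=
  (L : ℝ≥0∞)⁻¹ • ∑ k ∈ Finset.range L,
    Measure.dirac (Complex.exp (2 * (π : ℂ) * Complex.I * (k : ℂ) / (L : ℂ)))

theorem exp_two_pi_I_mul_div (k L : ℕ) :
    Complex.exp (2 * π * Complex.I * k / L) = Complex.exp (2 * π * Complex.I / L) ^ k := by
  rw [← Complex.exp_nat_mul]
  ring_nf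

theorem norm_exp_two_pi_I_div (L : ℕ) : ‖Complex.exp (2 * π * Complex.I / L)‖ = 1 := by
  simp [Complex.norm_exp]

theorem ae_norm_rootsOfUnityUniform (L : ℕ) : ∀ᵐ z ∂rootsOfUnityUniform L, ‖z‖ = 1 := by
  have hms : MeasurableSet {z : ℂ | ¬‖z‖ = 1} :=
    (measurableSet_eq_fun (by fun_prop) (by fun_prop)).compl
  rw [ae_iff, rootsOfUnityUniform, Measure.smul_apply, Measure.coe_finsetSum, Finset.sum_apply,
    Finset.sum_eq_zero fun k _ => ?_, smul_zero]
  rw [Measure.dirac_apply' _ hms, exp_two_pi_I_mul_div]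
  simp [norm_exp_two_pi_I_div]

theorem mixedMoment_rootsOfUnityUniform {L : ℕ} (hL : L ≠ 0) (a b : ℕ) :
    mixedMoment (rootsOfUnityUniform L) a b = if (L : ℤ) ∣ (a : ℤ) - b then 1 else 0 := by
  rw [mixedMoment, rootsOfUnityUniform, integral_smul_measure,
    integral_finsetSum_measure fun k _ => integrable_dirac (by finiteness)]
  simp_rw [integral_dirac, exp_two_pi_I_mul_div]
  set ζ := Complex.exp (2 * π * Complex.I / L)
  have hζ : IsPrimitiveRoot ζ L := Complex.isPrimitiveRoot_exp L hL
  have hterm (k : ℕ) : (ζ ^ k) ^ a * conj (ζ ^ k) ^ b = (ζ ^ ((a : ℤ) - b)) ^ k := by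
    rw [pow_mul_conj_pow_of_norm_eq_one (by rw [norm_pow, norm_exp_two_pi_I_div, one_pow]),
      ← zpow_natCast, ← zpow_mul, mul_comm, zpow_mul, zpow_natCast]
  simp_rw [hterm, ← hζ.zpow_eq_one_iff_dvd]
  split_ifs with hw
  · simp [hw, hL]
  · have hwL : (ζ ^ ((a : ℤ) - b)) ^ L = 1 := by
      rw [← zpow_natCast, ← zpow_mul, mul_comm, zpow_mul, zpow_natCast, hζ.pow_eq_one, one_zpow]
    simp [geom_sum_eq hw, hwL]

theorem stmt2_general (n L d : ℕ) (hL : 2 ≤ L)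
    (μS : Measure ℂ) [IsProbabilityMeasure μS]
    (hμS : μS = Measure.map (fun t : ℝ => Complex.exp (Complex.I * (t : ℂ)))
      ((ENNReal.ofReal (2 * Real.pi))⁻¹ • volume.restrict (Set.Ico 0 (2 * Real.pi))))
    (μZ : Measure ℂ) [IsProbabilityMeasure μZ]
    (hμZ : μZ = (L : ℝ≥0∞)⁻¹ • ∑ k ∈ Finset.range L,
      Measure.dirac (Complex.exp (2 * (Real.pi : ℂ) * Complex.I * (k : ℂ) / (L : ℂ)))) :
    ∫ x : Fin n → ℂ, (∑ ℓ ∈ Finset.Icc 1 L, ‖∑ j, x j ^ ℓ‖ ^ 2) ^ d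
        ∂(Measure.pi fun _ => μS)
    ≤ ∫ y : Fin n → ℂ, (∑ ℓ ∈ Finset.Icc 1 L, ‖∑ j, y j ^ ℓ‖ ^ 2) ^ d
        ∂(Measure.pi fun _ => μZ) := by
  change μS = circleUniform at hμS
  change μZ = rootsOfUnityUniform L at hμZ
  subst hμS hμZ
  refine integral_powerSumNormSq_pow_le circleUniform (rootsOfUnityUniform L)
    (ae_norm_circleUniform.mono fun _ h => h.le)
    ((ae_norm_rootsOfUnityUniform L).mono fun _ h => h.le) (fun a b => ?_) (fun a b => ?_)
    (Finset.Icc 1 L) d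
  · rw [mixedMoment_circleUniform]
    split_ifs <;> simp
  · rw [mixedMoment_circleUniform, mixedMoment_rootsOfUnityUniform (by omega)]
    split_ifs <;> simp_all

/-- **Comparison of LDLR moments: uniform circle prior vs. `L`-cyclic prior.**
If `x₁,…,x_n` are i.i.d. uniform (Haar) on the unit circle `U(1)` and `y₁,…,y_n`
are i.i.d. uniform on the `L`-th roots of unity, then
`E[(∑_{ℓ=1}^L |∑_j x_j^ℓ|²)^d] ≤ E[(∑_{ℓ=1}^L |∑_j y_j^ℓ|²)^d]`. -/
theorem stmt2 (n L d : ℕ) (hn : 1 ≤ n) (hL : 2 ≤ L)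
    (μS : Measure ℂ) [IsProbabilityMeasure μS]
    (hμS : μS = Measure.map (fun t : ℝ => Complex.exp (Complex.I * (t : ℂ)))
      ((ENNReal.ofReal (2 * Real.pi))⁻¹ • volume.restrict (Set.Ico 0 (2 * Real.pi))))
    (μZ : Measure ℂ) [IsProbabilityMeasure μZ]
    (hμZ : μZ = (L : ℝ≥0∞)⁻¹ • ∑ k ∈ Finset.range L,
      Measure.dirac (Complex.exp (2 * (Real.pi : ℂ) * Complex.I * (k : ℂ) / (L : ℂ)))) :
    ∫ x : Fin n → ℂ, (∑ ℓ ∈ Finset.Icc 1 L, ‖∑ j, x j ^ ℓ‖ ^ 2) ^ d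
        ∂(Measure.pi fun _ => μS)
    ≤ ∫ y : Fin n → ℂ, (∑ ℓ ∈ Finset.Icc 1 L, ‖∑ j, y j ^ ℓ‖ ^ 2) ^ d
        ∂(Measure.pi fun _ => μZ) :=
  stmt2_general n L d hL μS hμS μZ hμZ
end

section
/- Fix integers n ≥ 1, L ≥ 2 and d ≥ 0, and let x₁, …, x_n be i.i.d. uniform on the set μ_L = {e^{2πik/L} : k = 0, …, L−1} of L-th roots of unity. Then E[(Σ_{ℓ=1}^{L} |Σ_{j=1}^{n} x_j^ℓ|²)^d] = |M_d^{Z_L}|, where M_d^{Z_L} = {(ℓ, a, b) ∈ {1,…,L}^d × {1,…,n}^d × {1,…,n}^d : Σ_{j=1}^{d} ℓ_j (e_{a_j} − e_{b_j}) ≡ 0 (mod L) coordinatewise in ℤ^n}, with e_1, …, e_n the standard basis vectors of ℤ^n. -/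
/-!
Write `ψ = ZMod.stdAddChar`, so that `ψ k = exp (2πik/L)` and the `L`-cyclic prior is the
push-forward of the uniform measure on `ZMod L` under `ψ`; the expectation becomes an average over
`x : (ZMod L)ⁿ`. Since `‖∑ⱼ ψ(xⱼ)^ℓ‖² = ∑_{p,q} ψ(ℓ (x_p - x_q))`, expanding the `d`-th power
gives a sum over tuples `(ℓ, a, b)` of `ψ (∑ₛ cₛ xₛ)` with `c = ∑ⱼ ℓⱼ (e_{aⱼ} - e_{bⱼ})`, and by
orthogonality of characters the average of that term over `x` is `1` if `L ∣ c` and `0` otherwise.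
-/

open MeasureTheory Finset ZMod
open scoped ENNReal NNReal

theorem integral_pi_smul_sum_dirac {α ι E : Type*} [Fintype α] [Fintype ι] [DecidableEq ι]
    [MeasurableSpace E] (c : ℝ≥0) (g : α → E) {f : (ι → E) → ℝ} (hf : Measurable f) :
    ∫ x, f x ∂(Measure.pi fun _ : ι => (c : ℝ≥0∞) • ∑ k, Measure.dirac (g k))
      = (c : ℝ) ^ Fintype.card ι * ∑ a : ι → α, f (fun i => g (a i)) := by
  let _ : MeasurableSpace α := ⊤
  have hg : Measurable g := measurable_from_top
  have hmap : (c • Measure.count).map g = (c : ℝ≥0∞) • ∑ k, Measure.dirac (g k) := by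
    rw [Measure.map_smul, Measure.count, Measure.map_sum hg.aemeasurable, Measure.sum_fintype]
    simp only [Measure.map_dirac' hg]
    rfl
  have hG : Measurable fun (a : ι → α) i => g (a i) := by fun_prop
  rw [← hmap, ← Measure.pi_map_pi fun _ => hg.aemeasurable,
    integral_map hG.aemeasurable hf.aestronglyMeasurable, integral_fintype .of_finite,
    Finset.mul_sum]
  refine Finset.sum_congr rfl fun a _ => ?_
  rw [Measure.real, ← Set.univ_pi_singleton a, Measure.pi_pi]
  simp

lemma ZMod.sum_range_natCast {M : Type*} [AddCommMonoid M] (L : ℕ) [NeZero L] (f : ZMod L → M) :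
    ∑ k ∈ range L, f k = ∑ z, f z :=
  Finset.sum_nbij' (↑) ZMod.val (by simp) (fun z _ => by simpa using ZMod.val_lt z)
    (fun k hk => ZMod.val_cast_of_lt (Finset.mem_range.mp hk)) (fun z _ => ZMod.natCast_zmod_val z)
    (fun _ _ => rfl)

lemma sum_range_exp_eq_sum_stdAddChar {M : Type*} [AddCommMonoid M] (L : ℕ) [NeZero L]
    (f : ℂ → M) :
    ∑ k ∈ range L, f (Complex.exp (2 * Real.pi * Complex.I * k / L))
      = ∑ z : ZMod L, f (stdAddChar z) := by
  rw [← ZMod.sum_range_natCast]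
  refine Finset.sum_congr rfl fun k _ => ?_
  rw [← Int.cast_natCast (R := ZMod L), stdAddChar_coe, Int.cast_natCast]

lemma AddChar.map_sum_eq_prod {A M κ : Type*} [AddCommMonoid A] [CommMonoid M] (ψ : AddChar A M)
    (s : Finset κ) (f : κ → A) : ψ (∑ i ∈ s, f i) = ∏ i ∈ s, ψ (f i) :=
  map_prod ψ.toMonoidHom (fun i => Multiplicative.ofAdd (f i)) s

variable {ι : Type*} [Fintype ι]

lemma AddChar.ofReal_norm_sum_pow_sq {G : Type*} [AddCommGroup G] [Finite G] (ψ : AddChar G ℂ)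
    (x : ι → G) (ℓ : ℕ) :
    ((‖∑ j, ψ (x j) ^ ℓ‖ ^ 2 : ℝ) : ℂ) = ∑ p, ∑ q, ψ (ℓ • (x p - x q)) := by
  simp_rw [← AddChar.map_nsmul_eq_pow, Complex.ofReal_pow, ← Complex.mul_conj', map_sum,
    ← AddChar.map_neg_eq_conj, Finset.sum_mul_sum, ← AddChar.map_add_eq_mul, smul_sub,
    sub_eq_add_neg]

lemma pow_sum_sum_sum_eq_sum_prod {R ν : Type*} [CommSemiring R] (S : Finset ν)
    (F : ν → ι → ι → R) (d : ℕ) :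
    (∑ ℓ ∈ S, ∑ p, ∑ q, F ℓ p q) ^ d
      = ∑ t ∈ Fintype.piFinset (fun _ : Fin d => S) ×ˢ
          (univ : Finset (Fin d → ι)) ×ˢ (univ : Finset (Fin d → ι)),
          ∏ j, F (t.1 j) (t.2.1 j) (t.2.2 j) := by
  rw [← Fin.prod_const, Finset.prod_univ_sum, Finset.sum_product]
  refine Finset.sum_congr rfl fun ℓ _ => ?_
  rw [Fintype.prod_sum, Finset.sum_product]
  refine Finset.sum_congr rfl fun a _ => ?_
  rw [Fintype.prod_sum]

noncomputable def multiFreqCorrelation (S : Finset ℕ) (x : ι → ℂ) : ℝ :=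
  ∑ ℓ ∈ S, ‖∑ j, x j ^ ℓ‖ ^ 2

variable [DecidableEq ι]

/-- The coordinates of `∑ⱼ ℓⱼ (e_{aⱼ} - e_{bⱼ}) ∈ ℤ^ι`. -/
def netFlow {κ : Type*} [Fintype κ] (ℓ : κ → ℕ) (a b : κ → ι) (s : ι) : ℤ :=
  ∑ j, (ℓ j : ℤ) * ((if a j = s then 1 else 0) - (if b j = s then 1 else 0))

lemma sum_nsmul_sub_eq_sum_netFlow_zsmul {κ M : Type*} [Fintype κ] [AddCommGroup M]
    (ℓ : κ → ℕ) (a b : κ → ι) (x : ι → M) :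
    ∑ j, ℓ j • (x (a j) - x (b j)) = ∑ s, netFlow ℓ a b s • x s := by
  simp only [netFlow, Finset.sum_smul]
  rw [Finset.sum_comm]
  refine Finset.sum_congr rfl fun j _ => ?_
  simp [mul_smul, sub_smul, ite_smul, Finset.sum_sub_distrib, smul_sub]

lemma sum_stdAddChar_sum_zsmul (L : ℕ) [NeZero L] (c : ι → ℤ) :
    ∑ x : ι → ZMod L, stdAddChar (∑ s, c s • x s)
      = if ∀ s, (L : ℤ) ∣ c s then (L : ℂ) ^ Fintype.card ι else 0 := by
  have hsum (c : ℤ) : ∑ v : ZMod L, stdAddChar (c • v) = if (L : ℤ) ∣ c then (L : ℂ) else 0 := by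
    simp_rw [zsmul_eq_mul, mul_comm (c : ZMod L),
      AddChar.sum_mulShift _ (isPrimitive_stdAddChar L), ZMod.card,
      ZMod.intCast_zmod_eq_zero_iff_dvd, apply_ite Nat.cast, Nat.cast_zero]
  simp_rw [AddChar.map_sum_eq_prod]
  rw [← Fintype.prod_sum fun s v => stdAddChar (c s • v)]
  simp_rw [hsum, Finset.prod_ite_zero, Finset.prod_const, Finset.mem_univ, true_imp_iff,
    Finset.card_univ]

lemma ofReal_multiFreqCorrelation_stdAddChar_pow (L d : ℕ) [NeZero L] (S : Finset ℕ)
    (x : ι → ZMod L) :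
    ((multiFreqCorrelation S (fun j => stdAddChar (x j)) ^ d : ℝ) : ℂ)
      = ∑ t ∈ Fintype.piFinset (fun _ : Fin d => S) ×ˢ
          (univ : Finset (Fin d → ι)) ×ˢ (univ : Finset (Fin d → ι)),
          stdAddChar (∑ s, netFlow t.1 t.2.1 t.2.2 s • x s) := by
  rw [multiFreqCorrelation, Complex.ofReal_pow, Complex.ofReal_sum]
  simp_rw [AddChar.ofReal_norm_sum_pow_sq, pow_sum_sum_sum_eq_sum_prod,
    ← AddChar.map_sum_eq_prod, sum_nsmul_sub_eq_sum_netFlow_zsmul]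

lemma sum_multiFreqCorrelation_stdAddChar_pow (L d : ℕ) [NeZero L] (S : Finset ℕ) :
    ∑ x : ι → ZMod L, multiFreqCorrelation S (fun j => stdAddChar (x j)) ^ d
      = (L : ℝ) ^ Fintype.card ι * #{t ∈ Fintype.piFinset (fun _ : Fin d => S) ×ˢ
          (univ : Finset (Fin d → ι)) ×ˢ (univ : Finset (Fin d → ι)) |
          ∀ s, (L : ℤ) ∣ netFlow t.1 t.2.1 t.2.2 s} := by
  apply Complex.ofReal_injective
  rw [Complex.ofReal_sum]
  simp_rw [ofReal_multiFreqCorrelation_stdAddChar_pow]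
  rw [Finset.sum_comm]
  simp_rw [sum_stdAddChar_sum_zsmul, Finset.sum_ite, Finset.sum_const_zero, add_zero,
    Finset.sum_const, nsmul_eq_mul]
  push_cast
  ring

theorem stmt4_general (n L d : ℕ) (hL : 2 ≤ L)
    (μZ : Measure ℂ)
    (hμZ : μZ = (L : ℝ≥0∞)⁻¹ • ∑ k ∈ Finset.range L,
      Measure.dirac (Complex.exp (2 * (Real.pi : ℂ) * Complex.I * (k : ℂ) / (L : ℂ)))) :
    ∫ x : Fin n → ℂ, (∑ ℓ ∈ Finset.Icc 1 L, ‖∑ j, x j ^ ℓ‖ ^ 2) ^ d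
        ∂(Measure.pi fun _ => μZ)
    = (Nat.card {t : (Fin d → ℕ) × (Fin d → Fin n) × (Fin d → Fin n) //
        (∀ j, t.1 j ∈ Finset.Icc 1 L) ∧
        ∀ s : Fin n, (L : ℤ) ∣ (∑ j, (t.1 j : ℤ) *
          ((if t.2.1 j = s then 1 else 0) - (if t.2.2 j = s then 1 else 0)))} : ℝ) := by
  have : NeZero L := ⟨by omega⟩
  have hLinv : (L : ℝ≥0∞)⁻¹ = (((L : ℝ≥0)⁻¹ : ℝ≥0) : ℝ≥0∞) := by
    rw [ENNReal.coe_inv (NeZero.ne _), ENNReal.coe_natCast]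
  change ∫ x, multiFreqCorrelation (Icc 1 L) x ^ d ∂_ = _
  rw [hμZ, hLinv, sum_range_exp_eq_sum_stdAddChar,
    integral_pi_smul_sum_dirac _ _ (by unfold multiFreqCorrelation; fun_prop),
    sum_multiFreqCorrelation_stdAddChar_pow, ← mul_assoc, ← mul_pow, NNReal.coe_inv,
    NNReal.coe_natCast, inv_mul_cancel₀ (NeZero.ne _), one_pow, one_mul, ← Nat.card_eq_finsetCard]
  congr 1
  refine Nat.card_congr (Equiv.subtypeEquivRight fun t => ?_)
  simp only [Finset.mem_filter, Finset.mem_product, Fintype.mem_piFinset, Finset.mem_univ,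
    and_true]
  rfl

/-- **Moments of the multi-frequency correlation under the `L`-cyclic prior
as a combinatorial count.** For `x₁,…,x_n` i.i.d. uniform on the `L`-th roots of
unity, `E[(∑_{ℓ=1}^L |∑_j x_j^ℓ|²)^d] = |M_d^{ℤ_L}|` where `M_d^{ℤ_L}` is the set
of tuples `(ℓ,a,b) ∈ [L]^d × [n]^d × [n]^d` with
`∑_j ℓ_j (e_{a_j} - e_{b_j}) ≡ 0 (mod L)` coordinatewise in `ℤ^n`. -/
theorem stmt4 (n L d : ℕ) (hn : 1 ≤ n) (hL : 2 ≤ L)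
    (μZ : Measure ℂ) [IsProbabilityMeasure μZ]
    (hμZ : μZ = (L : ℝ≥0∞)⁻¹ • ∑ k ∈ Finset.range L,
      Measure.dirac (Complex.exp (2 * (Real.pi : ℂ) * Complex.I * (k : ℂ) / (L : ℂ)))) :
    ∫ x : Fin n → ℂ, (∑ ℓ ∈ Finset.Icc 1 L, ‖∑ j, x j ^ ℓ‖ ^ 2) ^ d
        ∂(Measure.pi fun _ => μZ)
    = (Nat.card {t : (Fin d → ℕ) × (Fin d → Fin n) × (Fin d → Fin n) //
        (∀ j, t.1 j ∈ Finset.Icc 1 L) ∧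
        ∀ s : Fin n, (L : ℤ) ∣ (∑ j, (t.1 j : ℤ) *
          ((if t.2.1 j = s then 1 else 0) - (if t.2.2 j = s then 1 else 0)))} : ℝ) :=
  stmt4_general n L d hL μZ hμZ
end

section
/- Let L ≥ 2 and d ≥ 0 be integers, let n₀, n₁, …, n_{L−1} be real numbers, and set n = Σ_{ℓ=0}^{L−1} n_ℓ and S_L = ((L−1)/2) Σ_{ℓ=0}^{L−1} n_ℓ² − (1/2) Σ_{j≠k} n_j n_k. Then S_L^d = (L/2)^d · Σ_{d₁+⋯+d_{L−1}=d, d_ℓ ≥ 0} (d! / (d₁! ⋯ d_{L−1}!)) · Π_{ℓ=1}^{L−1} ((L−ℓ+1)/(L−ℓ))^{d_ℓ} · ((n − Σ_{j=1}^{ℓ−1} n_j)/(L−ℓ+1) − n_ℓ)^{2 d_ℓ}. -/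
open Finset

/-- Telescoping (Helmert-type) decomposition of the variance-like sum. -/
lemma stmt7_tele (L : ℕ) (hL : 2 ≤ L) (v : ℕ → ℝ) :
    ∑ k ∈ Finset.range (L - 1),
        (((L : ℝ) - k) / ((L : ℝ) - k - 1)) *
          ((v 0 + ∑ j ∈ Finset.Ico (k + 1) L, v j) / ((L : ℝ) - k) - v (k + 1)) ^ 2
      = ∑ j ∈ Finset.range L, v j ^ 2 - (∑ j ∈ Finset.range L, v j) ^ 2 / L := by
  set Q : ℕ → ℝ := fun k =>
    v 0 ^ 2 + ∑ j ∈ Finset.Ico (k + 1) L, v j ^ 2 -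
      (v 0 + ∑ j ∈ Finset.Ico (k + 1) L, v j) ^ 2 / ((L : ℝ) - k) with hQ
  have step : ∀ k, k < L - 1 → Q k - Q (k + 1)
      = (((L : ℝ) - k) / ((L : ℝ) - k - 1)) *
          ((v 0 + ∑ j ∈ Finset.Ico (k + 1) L, v j) / ((L : ℝ) - k) - v (k + 1)) ^ 2 := by
    intro k hk
    have hkL : k + 2 ≤ L := by omega
    have hm2 : (2 : ℝ) ≤ (L : ℝ) - k := by
      have : ((k : ℝ) + 2) ≤ (L : ℝ) := by exact_mod_cast hkL
      linarith
    have hm0 : (L : ℝ) - k ≠ 0 := by linarith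
    have hm1 : (L : ℝ) - k - 1 ≠ 0 := by linarith
    have hs : ∑ j ∈ Finset.Ico (k + 1) L, v j
        = v (k + 1) + ∑ j ∈ Finset.Ico (k + 2) L, v j := by
      rw [Finset.sum_eq_sum_Ico_succ_bot (by omega : k + 1 < L)]
    have hs2 : ∑ j ∈ Finset.Ico (k + 1) L, v j ^ 2
        = v (k + 1) ^ 2 + ∑ j ∈ Finset.Ico (k + 2) L, v j ^ 2 := by
      rw [Finset.sum_eq_sum_Ico_succ_bot (by omega : k + 1 < L)]
    simp only [hQ, hs, hs2]
    have e1 : (L : ℝ) - ((k + 1 : ℕ) : ℝ) = ((L : ℝ) - (k : ℝ)) - 1 := by push_cast; ring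
    rw [e1]
    obtain ⟨m, hm⟩ : ∃ m : ℝ, (L : ℝ) - (k : ℝ) = m := ⟨_, rfl⟩
    rw [hm] at hm0 hm1 ⊢
    field_simp
    ring
  have tele : ∑ k ∈ Finset.range (L - 1), (Q k - Q (k + 1)) = Q 0 - Q (L - 1) :=
    Finset.sum_range_sub' Q (L - 1)
  have hQL : Q (L - 1) = 0 := by
    have h1 : L - 1 + 1 = L := by omega
    have h2 : ((L : ℝ) - (L - 1 : ℕ)) = 1 := by
      have : ((L - 1 : ℕ) : ℝ) = (L : ℝ) - 1 := by
        have := Nat.cast_sub (by omega : 1 ≤ L) (R := ℝ)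
        simpa using this
      rw [this]; ring
    simp [hQ, h1, h2]
  have hQ0 : Q 0 = ∑ j ∈ Finset.range L, v j ^ 2 - (∑ j ∈ Finset.range L, v j) ^ 2 / L := by
    have h1 : ∑ j ∈ Finset.range L, v j = v 0 + ∑ j ∈ Finset.Ico 1 L, v j := by
      rw [Finset.range_eq_Ico, Finset.sum_eq_sum_Ico_succ_bot (by omega : 0 < L)]
    have h2 : ∑ j ∈ Finset.range L, v j ^ 2 = v 0 ^ 2 + ∑ j ∈ Finset.Ico 1 L, v j ^ 2 := by
      rw [Finset.range_eq_Ico, Finset.sum_eq_sum_Ico_succ_bot (by omega : 0 < L)]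
    simp only [hQ, h1, h2]
    norm_num
  calc ∑ k ∈ Finset.range (L - 1),
        (((L : ℝ) - k) / ((L : ℝ) - k - 1)) *
          ((v 0 + ∑ j ∈ Finset.Ico (k + 1) L, v j) / ((L : ℝ) - k) - v (k + 1)) ^ 2
      = ∑ k ∈ Finset.range (L - 1), (Q k - Q (k + 1)) :=
        Finset.sum_congr rfl fun k hk => (step k (Finset.mem_range.mp hk)).symm
    _ = Q 0 - Q (L - 1) := tele
    _ = _ := by rw [hQL, hQ0]; ring

/-- **Spectral/multinomial expansion of the quadratic form `S_L`.** For real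
numbers `n₀,…,n_{L-1}` with sum `n` and
`S_L = ((L-1)/2) ∑_ℓ n_ℓ² - (1/2) ∑_{j≠k} n_j n_k`, one has
`S_L^d = (L/2)^d ∑_{d₁+⋯+d_{L-1}=d} (d!/(d₁!⋯d_{L-1}!))
  ∏_{ℓ=1}^{L-1} ((L-ℓ+1)/(L-ℓ))^{d_ℓ} ((n - ∑_{j=1}^{ℓ-1} n_j)/(L-ℓ+1) - n_ℓ)^{2d_ℓ}`.
Here we index `ℓ ∈ {1,…,L-1}` by `ℓ' : Fin (L-1)` via `ℓ = ℓ' + 1`. -/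
theorem stmt7 (L d : ℕ) (hL : 2 ≤ L) (v : ℕ → ℝ)
    (n : ℝ) (hn : n = ∑ ℓ ∈ Finset.range L, v ℓ)
    (S : ℝ)
    (hS : S = ((L : ℝ) - 1) / 2 * ∑ ℓ ∈ Finset.range L, v ℓ ^ 2
      - 1 / 2 * ∑ j ∈ Finset.range L, ∑ k ∈ Finset.range L,
          (if j ≠ k then v j * v k else 0)) :
    S ^ d = ((L : ℝ) / 2) ^ d * ∑ e ∈ Finset.Nat.antidiagonalTuple (L - 1) d,
      ((d.factorial : ℝ) / ∏ ℓ, ((e ℓ).factorial : ℝ)) *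
        ∏ ℓ : Fin (L - 1),
          (((L : ℝ) - (ℓ : ℕ)) / ((L : ℝ) - (ℓ : ℕ) - 1)) ^ (e ℓ) *
            ((n - ∑ j ∈ Finset.Icc 1 (ℓ : ℕ), v j) / ((L : ℝ) - (ℓ : ℕ))
              - v ((ℓ : ℕ) + 1)) ^ (2 * e ℓ) := by
  classical
  have hL0 : (0 : ℝ) < L := by positivity
  -- the off-diagonal sum
  have hcross : ∑ j ∈ Finset.range L, ∑ k ∈ Finset.range L,
      (if j ≠ k then v j * v k else 0) = n ^ 2 - ∑ ℓ ∈ Finset.range L, v ℓ ^ 2 := by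
    have h1 : ∀ j ∈ Finset.range L, ∑ k ∈ Finset.range L,
        (if j ≠ k then v j * v k else 0) = v j * n - v j ^ 2 := by
      intro j hj
      have hrw : ∀ k, (if j ≠ k then v j * v k else 0)
          = v j * v k - (if j = k then v j * v k else 0) := by
        intro k; by_cases h : j = k <;> simp [h]
      rw [Finset.sum_congr rfl fun k _ => hrw k, Finset.sum_sub_distrib,
        Finset.sum_ite_eq, if_pos hj, ← Finset.mul_sum, ← hn]
      ring
    rw [Finset.sum_congr rfl h1, Finset.sum_sub_distrib, ← Finset.sum_mul, ← hn]
    ring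
  -- the partial-sum identity: tail sums vs Icc sums
  have hT : ∀ k : ℕ, k + 1 ≤ L →
      v 0 + ∑ j ∈ Finset.Ico (k + 1) L, v j = n - ∑ j ∈ Finset.Icc 1 k, v j := by
    intro k hk
    have hsplit : ∑ j ∈ Finset.range (k + 1), v j + ∑ j ∈ Finset.Ico (k + 1) L, v j
        = ∑ j ∈ Finset.range L, v j := Finset.sum_range_add_sum_Ico v hk
    have h0 : ∑ j ∈ Finset.range (k + 1), v j = v 0 + ∑ j ∈ Finset.Icc 1 k, v j := by
      rw [Finset.range_eq_Ico, Finset.sum_eq_sum_Ico_succ_bot (by omega : 0 < k + 1),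
        Finset.Ico_add_one_right_eq_Icc]
    rw [hn, ← hsplit, h0]; ring
  -- S as (L/2) times a sum of L-1 squares
  have hSsum : S = ((L : ℝ) / 2) * ∑ ℓ : Fin (L - 1),
      ((((L : ℝ) - (ℓ : ℕ)) / ((L : ℝ) - (ℓ : ℕ) - 1)) *
        ((n - ∑ j ∈ Finset.Icc 1 (ℓ : ℕ), v j) / ((L : ℝ) - (ℓ : ℕ)) - v ((ℓ : ℕ) + 1)) ^ 2) := by
    have := stmt7_tele L hL v
    rw [Fin.sum_univ_eq_sum_range
      (fun k => (((L : ℝ) - k) / ((L : ℝ) - k - 1)) *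
        ((n - ∑ j ∈ Finset.Icc 1 k, v j) / ((L : ℝ) - k) - v (k + 1)) ^ 2)]
    have hcongr : ∑ k ∈ Finset.range (L - 1),
        (((L : ℝ) - k) / ((L : ℝ) - k - 1)) *
          ((n - ∑ j ∈ Finset.Icc 1 k, v j) / ((L : ℝ) - k) - v (k + 1)) ^ 2
        = ∑ k ∈ Finset.range (L - 1),
        (((L : ℝ) - k) / ((L : ℝ) - k - 1)) *
          ((v 0 + ∑ j ∈ Finset.Ico (k + 1) L, v j) / ((L : ℝ) - k) - v (k + 1)) ^ 2 := by
      refine Finset.sum_congr rfl fun k hk => ?_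
      rw [hT k (by have := Finset.mem_range.mp hk; omega)]
    rw [hcongr, this, hS, hcross, ← hn]
    field_simp
    ring
  -- multinomial theorem
  rw [hSsum, mul_pow, Finset.sum_pow_eq_sum_piAntidiag,
    Finset.piAntidiag_univ_fin_eq_antidiagonalTuple d (L - 1)]
  congr 1
  refine Finset.sum_congr rfl fun e he => ?_
  have hesum : ∑ ℓ, e ℓ = d := (Finset.Nat.mem_antidiagonalTuple.mp he)
  have hmult : ((Nat.multinomial Finset.univ e : ℕ) : ℝ)
      = (d.factorial : ℝ) / ∏ ℓ, ((e ℓ).factorial : ℝ) := by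
    have hspec := Nat.multinomial_spec (Finset.univ : Finset (Fin (L - 1))) e
    rw [hesum] at hspec
    have hprod : (0 : ℝ) < ∏ ℓ, ((e ℓ).factorial : ℝ) := by
      apply Finset.prod_pos; intro i _; exact_mod_cast Nat.factorial_pos _
    field_simp
    rw [mul_comm] at hspec
    exact_mod_cast congrArg (Nat.cast (R := ℝ)) hspec
  rw [hmult]
  congr 1
  refine Finset.prod_congr rfl fun ℓ _ => ?_
  rw [mul_pow, ← pow_mul]
end

section
/- Let u₁, …, u_n be i.i.d. uniform on {0, 1, 2} and let N_k = #{j ∈ {1,…,n} : u_j = k} for k = 0, 1, 2. Then for every integer d ≥ 0, almost surely E[(N₀ − N₂)^{2d} | N₁] ≤ 2^d · d! · (n − N₁)^d. -/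
/-!
Given `N₁ = m`, the difference `N₀ - N₂` is a sum of `n - m` independent signs, whose `2d`-th
moment is at most the Gaussian one, `(2d - 1)‼ (n - m)^d ≤ 2^d d! (n - m)^d`.

To avoid conditioning explicitly, we bound `∑ g(N₁) (N₀ - N₂)^{2d}` for every nonnegative weight
`g`, by induction on `n` over the first coordinate: a coordinate `1` only shifts `N₁` (absorbed
into the weight), while a coordinate `0` or `2` adds `±1` to `N₀ - N₂`. Then
`(x + 1)^{2d} + (x - 1)^{2d} = 2 ∑ⱼ C(2d, 2j) x^{2j}` and `C(2d, 2j) (2j - 1)‼ ≤ (2d - 1)‼ C(d, j)`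
turn the inductive bounds on the lower moments into `(2d - 1)‼ (r + 1)^d`. Weights that are
indicators of `{N₁ ∈ t}` compare the integrals of both sides over every `σ(N₁)`-measurable set.
-/

open MeasureTheory

/-- Number of coordinates of `u` equal to `k`. -/
def cnt3 (n : ℕ) (u : Fin n → Fin 3) (k : Fin 3) : ℕ :=
  (Finset.univ.filter fun j => u j = k).card

open Finset Nat
open scoped ENNReal

theorem Fin.sum_univ_fun_succ {α M : Type*} [AddCommMonoid M] [Fintype α] {n : ℕ}
    (f : (Fin (n + 1) → α) → M) : ∑ v, f v = ∑ a, ∑ w : Fin n → α, f (Fin.cons a w) := by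
  rw [← (Fin.consEquiv fun _ => α).sum_comp, Fintype.sum_prod_type]
  rfl

theorem sum_range_two_mul_add_one_of_odd {M : Type*} [AddCommMonoid M] (d : ℕ) (f : ℕ → M)
    (hf : ∀ i, Odd i → f i = 0) :
    ∑ i ∈ range (2 * d + 1), f i = ∑ j ∈ range (d + 1), f (2 * j) := by
  rw [← sum_image (g := (2 * ·)) fun _ _ _ _ h => by simpa using h]
  refine (sum_subset (fun i hi => ?_) fun i hi hi' => hf i ?_).symm
  · obtain ⟨j, hj, rfl⟩ := mem_image.mp hi
    simp only [mem_range] at hj ⊢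
    omega
  · simp only [mem_image, mem_range, not_exists, not_and] at hi hi'
    have := hi' (i / 2)
    rw [Nat.odd_iff]
    omega

theorem add_one_pow_add_sub_one_pow {R : Type*} [CommRing R] (x : R) (d : ℕ) :
    (x + 1) ^ (2 * d) + (x - 1) ^ (2 * d)
      = 2 * ∑ j ∈ range (d + 1), ((2 * d).choose (2 * j) : R) * x ^ (2 * j) := by
  have hneg : (x - 1) ^ (2 * d) = (-x + 1) ^ (2 * d) := by
    rw [pow_mul, pow_mul, ← neg_sub, neg_sq]
    ring
  rw [hneg, add_pow, add_pow, ← sum_add_distrib, mul_sum,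
    sum_range_two_mul_add_one_of_odd d _ fun i hi => by simp [hi.neg_pow]]
  refine sum_congr rfl fun j _ => ?_
  rw [(even_two_mul j).neg_pow]
  ring

theorem factorial_two_mul_eq_doubleFactorial_mul (n : ℕ) :
    (2 * n)! = (2 * n)‼ * (2 * n - 1)‼ := by
  cases n with
  | zero => rfl
  | succ n => simpa [Nat.mul_succ] using factorial_eq_mul_doubleFactorial (2 * n + 1)

theorem doubleFactorial_two_mul_sub_one_le (d : ℕ) : (2 * d - 1)‼ ≤ 2 ^ d * d ! := by
  induction d with
  | zero => rfl
  | succ d ih =>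
    rw [show 2 * (d + 1) - 1 = 2 * d + 1 by omega, doubleFactorial_add_one, pow_succ,
      factorial_succ]
    nlinarith

/-- After multiplying by `(2j)‼ (2k)‼ = 2^d j! k!` (with `k = d - j`), this is `(2k)‼ ≤ (2k)!`. -/
theorem choose_mul_doubleFactorial_le {d j : ℕ} (h : j ≤ d) :
    (2 * d).choose (2 * j) * (2 * j - 1)‼ ≤ (2 * d - 1)‼ * d.choose j := by
  obtain ⟨k, rfl⟩ := Nat.exists_eq_add_of_le h
  have hpos : 0 < (2 * j)‼ * (2 * k)‼ := Nat.mul_pos (doubleFactorial_pos _) (doubleFactorial_pos _)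
  refine Nat.le_of_mul_le_mul_right ?_ hpos
  calc (2 * (j + k)).choose (2 * j) * (2 * j - 1)‼ * ((2 * j)‼ * (2 * k)‼)
      = (2 * (j + k)).choose (2 * j) * ((2 * j)‼ * (2 * j - 1)‼) * (2 * k)‼ := by ring
    _ ≤ (2 * (j + k)).choose (2 * j) * (2 * j)! * (2 * k)! := by
        rw [factorial_two_mul_eq_doubleFactorial_mul j]
        gcongr
        exact doubleFactorial_le_factorial _
    _ = (2 * (j + k) - 1)‼ * (2 * (j + k))‼ := by
        have h := Nat.choose_mul_factorial_mul_factorial (show 2 * j ≤ 2 * (j + k) by omega)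
        rw [show 2 * (j + k) - 2 * j = 2 * k by omega] at h
        rw [h, factorial_two_mul_eq_doubleFactorial_mul, mul_comm]
    _ = (2 * (j + k) - 1)‼ * (j + k).choose j * ((2 * j)‼ * (2 * k)‼) := by
        rw [doubleFactorial_two_mul, doubleFactorial_two_mul, doubleFactorial_two_mul,
          ← Nat.choose_mul_factorial_mul_factorial (Nat.le_add_right j k), Nat.add_sub_cancel_left,
          pow_add]
        ring

/-- Adding an independent sign to `x` preserves the Gaussian moment bound `(2j - 1)‼ r^j`,
with `r` increased by one. -/
theorem sum_mul_add_one_pow_add_sub_one_pow_le {ι : Type*} [Fintype ι] (w x r : ι → ℝ)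
    (hw : ∀ i, 0 ≤ w i) (hr : ∀ i, 0 ≤ r i) (d : ℕ)
    (h : ∀ j ≤ d, ∑ i, w i * x i ^ (2 * j) ≤ (2 * j - 1)‼ * ∑ i, w i * r i ^ j) :
    ∑ i, w i * ((x i + 1) ^ (2 * d) + (x i - 1) ^ (2 * d))
      ≤ 2 * ((2 * d - 1)‼ * ∑ i, w i * (r i + 1) ^ d) := by
  have hmom : ∀ j, 0 ≤ ∑ i, w i * r i ^ j := fun j =>
    sum_nonneg fun i _ => mul_nonneg (hw i) (pow_nonneg (hr i) j)
  calc ∑ i, w i * ((x i + 1) ^ (2 * d) + (x i - 1) ^ (2 * d))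
      = 2 * ∑ j ∈ range (d + 1), ((2 * d).choose (2 * j) : ℝ) * ∑ i, w i * x i ^ (2 * j) := by
        simp_rw [add_one_pow_add_sub_one_pow, mul_sum, sum_comm (s := univ)]
        refine sum_congr rfl fun i _ => sum_congr rfl fun j _ => ?_
        ring
    _ ≤ 2 * ∑ j ∈ range (d + 1),
          ((2 * d).choose (2 * j) : ℝ) * ((2 * j - 1)‼ * ∑ i, w i * r i ^ j) := by
        gcongr with j hj
        exact h j (Nat.lt_succ_iff.mp (mem_range.mp hj))
    _ ≤ 2 * ∑ j ∈ range (d + 1), ((2 * d - 1)‼ * d.choose j : ℝ) * ∑ i, w i * r i ^ j := by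
        refine mul_le_mul_of_nonneg_left (sum_le_sum fun j hj => ?_) zero_le_two
        rw [← mul_assoc]
        refine mul_le_mul_of_nonneg_right ?_ (hmom j)
        exact_mod_cast choose_mul_doubleFactorial_le (Nat.lt_succ_iff.mp (mem_range.mp hj))
    _ = 2 * ((2 * d - 1)‼ * ∑ i, w i * (r i + 1) ^ d) := by
        simp_rw [add_pow, one_pow, mul_one, mul_sum]
        rw [sum_comm]
        exact sum_congr rfl fun i _ => sum_congr rfl fun j _ => by ring

theorem cnt3_cons (n : ℕ) (a : Fin 3) (w : Fin n → Fin 3) (k : Fin 3) :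
    cnt3 (n + 1) (Fin.cons a w) k = cnt3 n w k + if a = k then 1 else 0 := by
  simp only [cnt3, card_filter, Fin.sum_univ_succ, Fin.cons_zero, Fin.cons_succ, add_comm]

theorem cnt3_le (n : ℕ) (v : Fin n → Fin 3) (k : Fin 3) : cnt3 n v k ≤ n :=
  (card_filter_le _ _).trans_eq (card_fin n)

theorem sum_mul_cnt3_moment_le_doubleFactorial (n : ℕ) :
    ∀ (d : ℕ) (g : ℕ → ℝ), (∀ m, 0 ≤ g m) →
      ∑ v : Fin n → Fin 3, g (cnt3 n v 1) * ((cnt3 n v 0 : ℝ) - cnt3 n v 2) ^ (2 * d)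
        ≤ (2 * d - 1)‼ * ∑ v : Fin n → Fin 3, g (cnt3 n v 1) * ((n : ℝ) - cnt3 n v 1) ^ d := by
  induction n with
  | zero => intro d g _; cases d <;> simp [cnt3]
  | succ n ih =>
    intro d g hg
    have hpair := sum_mul_add_one_pow_add_sub_one_pow_le (fun w => g (cnt3 n w 1))
      (fun w => (cnt3 n w 0 : ℝ) - cnt3 n w 2) (fun w => (n : ℝ) - cnt3 n w 1) (fun _ => hg _)
      (fun w => sub_nonneg.2 (Nat.cast_le.2 (cnt3_le n w 1))) d fun j _ => ih j g hg
    have hshift := ih d (fun m => g (m + 1)) fun _ => hg _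
    calc ∑ v : Fin (n + 1) → Fin 3,
          g (cnt3 (n + 1) v 1) * ((cnt3 (n + 1) v 0 : ℝ) - cnt3 (n + 1) v 2) ^ (2 * d)
        = ∑ w : Fin n → Fin 3,
            (g (cnt3 n w 1) * (((cnt3 n w 0 : ℝ) - cnt3 n w 2 + 1) ^ (2 * d)
              + ((cnt3 n w 0 : ℝ) - cnt3 n w 2 - 1) ^ (2 * d))
            + g (cnt3 n w 1 + 1) * ((cnt3 n w 0 : ℝ) - cnt3 n w 2) ^ (2 * d)) := by
          rw [Fin.sum_univ_fun_succ, sum_comm]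
          refine sum_congr rfl fun w _ => ?_
          simp only [Fin.sum_univ_three, cnt3_cons, Fin.reduceEq, if_true, if_false, add_zero]
          push_cast
          ring
      _ ≤ 2 * ((2 * d - 1)‼ * ∑ w : Fin n → Fin 3, g (cnt3 n w 1) * ((n : ℝ) - cnt3 n w 1 + 1) ^ d)
          + (2 * d - 1)‼ *
            ∑ w : Fin n → Fin 3, g (cnt3 n w 1 + 1) * ((n : ℝ) - cnt3 n w 1) ^ d := by
          rw [sum_add_distrib]
          exact add_le_add hpair hshift
      _ = (2 * d - 1)‼ * ∑ v : Fin (n + 1) → Fin 3,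
            g (cnt3 (n + 1) v 1) * ((↑(n + 1) : ℝ) - cnt3 (n + 1) v 1) ^ d := by
          rw [Fin.sum_univ_fun_succ, sum_comm]
          simp_rw [mul_sum, ← sum_add_distrib]
          refine sum_congr rfl fun w _ => ?_
          simp only [Fin.sum_univ_three, cnt3_cons, Fin.reduceEq, if_true, if_false, add_zero]
          push_cast
          ring

theorem sum_mul_cnt3_moment_le (n d : ℕ) (g : ℕ → ℝ) (hg : ∀ m, 0 ≤ g m) :
    ∑ v : Fin n → Fin 3, g (cnt3 n v 1) * ((cnt3 n v 0 : ℝ) - cnt3 n v 2) ^ (2 * d)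
      ≤ ∑ v : Fin n → Fin 3, g (cnt3 n v 1) * (2 ^ d * d ! * ((n : ℝ) - cnt3 n v 1) ^ d) := by
  have hnonneg : 0 ≤ ∑ v : Fin n → Fin 3, g (cnt3 n v 1) * ((n : ℝ) - cnt3 n v 1) ^ d :=
    sum_nonneg fun v _ =>
      mul_nonneg (hg _) (pow_nonneg (sub_nonneg.2 (Nat.cast_le.2 (cnt3_le n v 1))) d)
  calc _ ≤ (2 * d - 1)‼ * ∑ v : Fin n → Fin 3, g (cnt3 n v 1) * ((n : ℝ) - cnt3 n v 1) ^ d :=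
        sum_mul_cnt3_moment_le_doubleFactorial n d g hg
    _ ≤ 2 ^ d * d ! * ∑ v : Fin n → Fin 3, g (cnt3 n v 1) * ((n : ℝ) - cnt3 n v 1) ^ d := by
        gcongr
        exact_mod_cast doubleFactorial_two_mul_sub_one_le d
    _ = _ := by
        rw [mul_sum]
        exact sum_congr rfl fun v _ => by ring

theorem ae_condExp_le_of_forall_setIntegral_le {α : Type*} {m m0 : MeasurableSpace α}
    {μ : Measure α} {f g : α → ℝ} (hm : m ≤ m0) [SigmaFinite (μ.trim hm)]
    (hf : Integrable f μ) (hg : Integrable g μ) (hgm : StronglyMeasurable[m] g)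
    (h : ∀ s, MeasurableSet[m] s → μ s < ∞ → ∫ x in s, f x ∂μ ≤ ∫ x in s, g x ∂μ) :
    μ[f | m] ≤ᵐ[μ] g := by
  refine ae_le_of_ae_le_trim <| ae_le_of_forall_setIntegral_le
    (integrable_condExp.trim hm stronglyMeasurable_condExp) (hg.trim hm hgm) fun s hs hμs => ?_
  rw [← setIntegral_trim hm stronglyMeasurable_condExp hs, ← setIntegral_trim hm hgm hs,
    setIntegral_condExp hm hf hs]
  exact h s hs (by rwa [trim_measurableSet_eq hm hs] at hμs)

theorem integral_pi_eq_mul_sum {ι α : Type*} [Fintype ι] [DecidableEq ι] [Fintype α]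
    [MeasurableSpace α] [MeasurableSingletonClass α] (ν : Measure α) [IsFiniteMeasure ν]
    {c : ℝ≥0∞} (hν : ∀ a, ν {a} = c) (f : (ι → α) → ℝ) :
    ∫ v, f v ∂(Measure.pi fun _ => ν) = c.toReal ^ Fintype.card ι * ∑ v, f v := by
  rw [integral_fintype .of_finite, mul_sum]
  refine sum_congr rfl fun v _ => ?_
  simp [measureReal_def, hν]

theorem Set.indicator_preimage_apply_eq_mul {α β M : Type*} [MulZeroOneClass M] (t : Set β)
    (N : α → β) (F : α → M) (v : α) : (N ⁻¹' t).indicator F v = t.indicator 1 (N v) * F v := by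
  by_cases h : N v ∈ t <;> simp [h]

/-- **Conditional moment bound for multinomial counts.** For `u₁,…,u_n` i.i.d.
uniform on `{0,1,2}` with counts `N_k`, almost surely
`E[(N₀ − N₂)^{2d} | N₁] ≤ 2^d · d! · (n − N₁)^d`. -/
theorem stmt10 (n d : ℕ)
    (μ3 : Measure (Fin 3)) [IsProbabilityMeasure μ3]
    (hμ3 : ∀ k, μ3 {k} = 1 / 3)
    (μ : Measure (Fin n → Fin 3)) (hμ : μ = Measure.pi fun _ => μ3) :
    ∀ᵐ u ∂μ,
      (μ[fun v => ((cnt3 n v 0 : ℝ) - (cnt3 n v 2 : ℝ)) ^ (2 * d) |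
          MeasurableSpace.comap (fun v => cnt3 n v 1) ⊤]) u
        ≤ 2 ^ d * (d.factorial : ℝ) * ((n : ℝ) - (cnt3 n u 1 : ℝ)) ^ d := by
  subst hμ
  have hN : Measurable fun v : Fin n → Fin 3 => cnt3 n v 1 := measurable_of_finite _
  have hbound : StronglyMeasurable[MeasurableSpace.comap (fun v => cnt3 n v 1) ⊤]
      fun u : Fin n → Fin 3 => 2 ^ d * (d ! : ℝ) * ((n : ℝ) - cnt3 n u 1) ^ d :=
    ((measurable_of_countable fun m : ℕ => 2 ^ d * (d ! : ℝ) * ((n : ℝ) - m) ^ d).comp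
      (comap_measurable _)).stronglyMeasurable
  refine ae_condExp_le_of_forall_setIntegral_le hN.comap_le .of_finite .of_finite hbound ?_
  rintro _ ⟨t, -, rfl⟩ -
  rw [← integral_indicator (Set.toFinite _).measurableSet,
    ← integral_indicator (Set.toFinite _).measurableSet,
    integral_pi_eq_mul_sum μ3 hμ3, integral_pi_eq_mul_sum μ3 hμ3]
  simp only [Set.indicator_preimage_apply_eq_mul]
  exact mul_le_mul_of_nonneg_left
    (sum_mul_cnt3_moment_le n d _ (Set.indicator_nonneg fun _ _ => zero_le_one)) (by positivity)
end

section
/- Let X be a real random variable with E[X] = 0, variance σ² = E[X²] > 0, and finite moment generating function E[e^{tX}] < ∞ for all t ∈ ℝ. For each n, let X₁, …, X_n be i.i.d. copies of X. Then for every sequence (α_n) of nonnegative reals with α_n/n → 0, there exists N such that for all n ≥ N: E[|Σ_{i=1}^{n} X_i|^{2α_n}] ≤ 4 · 2^{α_n} · Γ(2α_n + 1) · σ^{2α_n} · n^{α_n}, where Γ is the Gamma function. -/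
/-!
For `l > 0` and `p ≥ 0` one has `|s| ^ p ≤ Γ(p + 1) l ^ (-p) (e^{ls} + e^{-ls})`, because
`Γ(p + 1) ≥ ∫_x^∞ t^p e^{-t} dt ≥ x^p e^{-x}`. Integrating against the law of `S_n`, whose moment
generating function is `M(t)^n`, bounds `E|S_n|^{2α}` by `2 Γ(2α + 1) l^{-2α} max(M(l), M(-l))^n`.
Since `M(0) = 1`, `M'(0) = 0` and `M''(0) = σ²`, Taylor's theorem gives `M(t) ≤ e^{σ² t²}` near `0`,
and `l² = α_n / (σ² n)` tends to `0` because `α_n / n → 0`. With this choice the bound becomes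
`2 Γ(2α + 1) (2σ²n)^α (e / 2α)^α`, and `(e / 2α)^α ≤ e^{1/2} ≤ 2`.
-/

open MeasureTheory Filter Topology Real Set ProbabilityTheory

theorem rpow_le_gamma_mul_exp {p x : ℝ} (hp : 0 ≤ p) (hx : 0 ≤ x) :
    x ^ p ≤ Gamma (p + 1) * exp x := by
  have hint : IntegrableOn (fun t : ℝ => exp (-t) * t ^ p) (Ioi 0) := by
    simpa using GammaIntegral_convergent (show 0 < p + 1 by linarith)
  have htail : exp (-x) * x ^ p ≤ Gamma (p + 1) :=
    calc exp (-x) * x ^ p = ∫ t in Ioi x, exp (-t) * x ^ p := by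
          rw [integral_mul_const, integral_exp_neg_Ioi]
      _ ≤ ∫ t in Ioi x, exp (-t) * t ^ p := by
          refine setIntegral_mono_on ?_ (hint.mono_set (Ioi_subset_Ioi hx))
            measurableSet_Ioi fun t ht => ?_
          · have h := (exp_neg_integrableOn_Ioi x one_pos).mul_const (x ^ p)
            simp only [neg_mul, one_mul] at h
            exact h
          · gcongr; exact ht.le
      _ ≤ ∫ t in Ioi 0, exp (-t) * t ^ p :=
          setIntegral_mono_set hint
            ((ae_restrict_mem measurableSet_Ioi).mono fun t (ht : 0 < t) => by positivity)
            (Ioi_subset_Ioi hx).eventuallyLE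
      _ = Gamma (p + 1) := by
          rw [Gamma_eq_integral (by linarith)]; simp
  calc x ^ p = exp x * (exp (-x) * x ^ p) := by rw [← mul_assoc, ← exp_add]; simp
    _ ≤ exp x * Gamma (p + 1) := by gcongr
    _ = Gamma (p + 1) * exp x := mul_comm _ _

theorem abs_rpow_le_gamma_mul_exp_add_exp_neg {p l : ℝ} (hp : 0 ≤ p) (hl : 0 < l) (s : ℝ) :
    |s| ^ p ≤ Gamma (p + 1) * l ^ (-p) * (exp (l * s) + exp (-l * s)) :=
  calc |s| ^ p = l ^ (-p) * (l * |s|) ^ p := by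
        rw [mul_rpow hl.le (abs_nonneg s), ← mul_assoc, ← rpow_add hl]; simp
    _ ≤ l ^ (-p) * (Gamma (p + 1) * exp |l * s|) := by
        rw [abs_mul, abs_of_pos hl]
        gcongr
        exact rpow_le_gamma_mul_exp hp (by positivity)
    _ ≤ l ^ (-p) * (Gamma (p + 1) * (exp (l * s) + exp (-l * s))) := by
        rw [neg_mul]
        gcongr
        exact exp_abs_le _
    _ = Gamma (p + 1) * l ^ (-p) * (exp (l * s) + exp (-l * s)) := by ring

theorem integral_abs_rpow_le_gamma_mul_mgf {Ω : Type*} [MeasurableSpace Ω] {ν : Measure Ω}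
    {Y : Ω → ℝ} {p l : ℝ} (hp : 0 ≤ p) (hl : 0 < l)
    (hpos : Integrable (fun ω => exp (l * Y ω)) ν)
    (hneg : Integrable (fun ω => exp (-l * Y ω)) ν) :
    ∫ ω, |Y ω| ^ p ∂ν ≤ Gamma (p + 1) * l ^ (-p) * (mgf Y ν l + mgf Y ν (-l)) := by
  rw [mgf, mgf, ← integral_add hpos hneg, ← integral_const_mul]
  exact integral_mono_of_nonneg (ae_of_all _ fun ω => by positivity)
    ((hpos.add hneg).const_mul _)
    (ae_of_all _ fun ω => abs_rpow_le_gamma_mul_exp_add_exp_neg hp hl (Y ω))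

theorem exp_mul_sum_eq_prod {ι Ω : Type*} [Fintype ι] (X : Ω → ℝ) (t : ℝ) (ω : ι → Ω) :
    exp (t * ∑ i, X (ω i)) = ∏ i, exp (t * X (ω i)) := by
  rw [Finset.mul_sum, exp_sum]

theorem integrable_exp_mul_sum_pi {ι Ω : Type*} [Fintype ι] [MeasurableSpace Ω]
    {μ : Measure Ω} [SigmaFinite μ] {X : Ω → ℝ} {t : ℝ}
    (h : Integrable (fun ω => exp (t * X ω)) μ) :
    Integrable (fun ω : ι → Ω => exp (t * ∑ i, X (ω i))) (Measure.pi fun _ => μ) := by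
  simp_rw [exp_mul_sum_eq_prod]
  exact Integrable.fintype_prod (f := fun _ => _) fun _ => h

theorem mgf_sum_pi {ι Ω : Type*} [Fintype ι] [MeasurableSpace Ω]
    (μ : Measure Ω) [SigmaFinite μ] (X : Ω → ℝ) (t : ℝ) :
    mgf (fun ω : ι → Ω => ∑ i, X (ω i)) (Measure.pi fun _ => μ) t
      = mgf X μ t ^ Fintype.card ι := by
  simp_rw [mgf, exp_mul_sum_eq_prod]
  exact integral_fintype_prod_eq_pow (fun ω => exp (t * X ω))

theorem mgf_le_exp_mul_sq_of_integral_eq_zero {Ω : Type*} [MeasurableSpace Ω] {μ : Measure Ω}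
    [IsProbabilityMeasure μ] {X : Ω → ℝ}
    (hint : ∀ t, Integrable (fun ω => exp (t * X ω)) μ) (hmean : ∫ ω, X ω ∂μ = 0)
    (hvar : 0 < ∫ ω, X ω ^ 2 ∂μ) :
    ∀ᶠ t in 𝓝 0, mgf X μ t ≤ exp ((∫ ω, X ω ^ 2 ∂μ) * t ^ 2) := by
  set V := ∫ ω, X ω ^ 2 ∂μ
  have hset : interior (integrableExpSet X μ) = univ := by
    rw [show integrableExpSet X μ = univ by ext t; simp [integrableExpSet, hint], interior_univ]
  have hdiff : ContDiff ℝ 2 (mgf X μ) :=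
    AnalyticOnNhd.contDiff (hset ▸ analyticOnNhd_mgf)
  have htaylor : ∀ t, taylorWithinEval (mgf X μ) 2 univ 0 t = 1 + V / 2 * t ^ 2 := by
    intro t
    have h0 : (0 : ℝ) ∈ interior (integrableExpSet X μ) := hset ▸ mem_univ 0
    simp [taylor_within_apply, iteratedDeriv_mgf_zero h0, hmean, V]
    ring
  have hsmall := (taylor_isLittleO_univ hdiff (x₀ := 0)).def (half_pos hvar)
  filter_upwards [hsmall] with t ht
  simp only [htaylor, sub_zero, norm_pow, Real.norm_eq_abs, sq_abs] at ht
  calc mgf X μ t ≤ V * t ^ 2 + 1 := by linarith [le_abs_self (mgf X μ t - (1 + V / 2 * t ^ 2))]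
    _ ≤ exp (V * t ^ 2) := add_one_le_exp _

theorem integral_abs_sum_rpow_le_of_mgf_le {ι Ω : Type*} [Fintype ι] [MeasurableSpace Ω]
    {μ : Measure Ω} [SigmaFinite μ] {X : Ω → ℝ} {p l M : ℝ} (hp : 0 ≤ p) (hl : 0 < l)
    (hpos : Integrable (fun ω => exp (l * X ω)) μ)
    (hneg : Integrable (fun ω => exp (-l * X ω)) μ)
    (hMpos : mgf X μ l ≤ M) (hMneg : mgf X μ (-l) ≤ M) :
    ∫ ω : ι → Ω, |∑ i, X (ω i)| ^ p ∂(Measure.pi fun _ => μ)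
      ≤ 2 * Gamma (p + 1) * (l ^ (-p) * M ^ Fintype.card ι) := by
  calc _ ≤ Gamma (p + 1) * l ^ (-p)
          * (mgf X μ l ^ Fintype.card ι + mgf X μ (-l) ^ Fintype.card ι) := by
        rw [← mgf_sum_pi, ← mgf_sum_pi]
        exact integral_abs_rpow_le_gamma_mul_mgf hp hl (integrable_exp_mul_sum_pi hpos)
          (integrable_exp_mul_sum_pi hneg)
    _ ≤ Gamma (p + 1) * l ^ (-p) * (M ^ Fintype.card ι + M ^ Fintype.card ι) := by
        have : 0 < Gamma (p + 1) := Gamma_pos_of_pos (by linarith)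
        gcongr <;> exact mgf_nonneg
    _ = 2 * Gamma (p + 1) * (l ^ (-p) * M ^ Fintype.card ι) := by ring

theorem rpow_div_self_le_exp {c a : ℝ} (hc : 0 < c) (ha : 0 < a) :
    (c / a) ^ a ≤ exp (c / exp 1) := by
  rw [rpow_def_of_pos (by positivity), exp_le_exp]
  have hlog : log (c / a) ≤ c / a / exp 1 := by
    have := log_le_sub_one_of_pos (show 0 < c / a / exp 1 by positivity)
    rw [log_div (by positivity) (exp_pos 1).ne', log_exp] at this
    linarith
  calc log (c / a) * a ≤ c / a / exp 1 * a := by gcongr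
    _ = c / exp 1 := by field_simp

theorem sqrt_rpow_neg_mul_exp_pow_le {V a : ℝ} {n : ℕ} (hV : 0 < V) (hn : 0 < n) (ha : 0 < a) :
    √(a / (V * n)) ^ (-(2 * a)) * exp (V * √(a / (V * n)) ^ 2) ^ n
      ≤ 2 * 2 ^ a * V ^ a * n ^ a := by
  have hn' : (0 : ℝ) < n := Nat.cast_pos.2 hn
  have hsq : √(a / (V * n)) ^ 2 = a / (V * n) := sq_sqrt (by positivity)
  have hrpow : √(a / (V * n)) ^ (-(2 * a)) = (V * n / a) ^ a := by
    rw [sqrt_eq_rpow, ← rpow_mul (by positivity), ← inv_div, inv_rpow (by positivity),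
      ← rpow_neg (by positivity)]
    ring_nf
  have hexp : exp (V * √(a / (V * n)) ^ 2) ^ n = exp 1 ^ a := by
    rw [← exp_nat_mul, hsq, ← exp_one_rpow]
    congr 1
    field_simp
  have hhalf : (exp 1 / 2 / a) ^ a ≤ 2 := by
    calc (exp 1 / 2 / a) ^ a ≤ exp (exp 1 / 2 / exp 1) := rpow_div_self_le_exp (by positivity) ha
      _ = exp (1 / 2) := by field_simp
      _ ≤ 2 := by
        have hsq : exp (1 / 2) ^ 2 = exp 1 := by rw [← exp_nat_mul]; norm_num
        nlinarith [exp_pos (1 / 2), exp_one_lt_d9]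
  calc √(a / (V * n)) ^ (-(2 * a)) * exp (V * √(a / (V * n)) ^ 2) ^ n
      = (2 * V * n) ^ a * (exp 1 / 2 / a) ^ a := by
        rw [hrpow, hexp, ← mul_rpow (by positivity) (by positivity),
          ← mul_rpow (by positivity) (by positivity)]
        congr 1
        field_simp
    _ ≤ (2 * V * n) ^ a * 2 := by gcongr
    _ = 2 * 2 ^ a * V ^ a * n ^ a := by
        rw [mul_rpow (by positivity) hn'.le, mul_rpow (by norm_num) hV.le]
        ring

/-- **Fractional moment bound for sums of i.i.d. centered variables with a
moment generating function.** If `X` has law `μ`, mean `0`, variance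
`σ² = E[X²] > 0` and `E[e^{tX}] < ∞` for all `t`, then for any nonnegative
sequence `α_n` with `α_n/n → 0`, eventually
`E[|∑_{i=1}^n X_i|^{2α_n}] ≤ 4 · 2^{α_n} · Γ(2α_n + 1) · σ^{2α_n} · n^{α_n}`. -/
theorem stmt11 (μ : Measure ℝ) [IsProbabilityMeasure μ]
    (hmean : ∫ x, x ∂μ = 0)
    (hvar : 0 < ∫ x, x ^ 2 ∂μ)
    (hmgf : ∀ t : ℝ, Integrable (fun x => Real.exp (t * x)) μ)
    (α : ℕ → ℝ) (hα : ∀ n, 0 ≤ α n)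
    (hαn : Tendsto (fun n => α n / n) atTop (nhds 0)) :
    ∃ N : ℕ, ∀ n ≥ N,
      ∫ x : Fin n → ℝ, |∑ i, x i| ^ (2 * α n) ∂(Measure.pi fun _ => μ)
        ≤ 4 * 2 ^ α n * Real.Gamma (2 * α n + 1)
            * (∫ x, x ^ 2 ∂μ) ^ α n * (n : ℝ) ^ α n := by
  set V := ∫ x, x ^ 2 ∂μ
  set l : ℕ → ℝ := fun n => √(α n / (V * n))
  have hl : Tendsto l atTop (𝓝 0) := by
    have h := (hαn.div_const V).sqrt
    simp only [zero_div, sqrt_zero, div_div, mul_comm _ V] at h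
    exact h
  have hloc := mgf_le_exp_mul_sq_of_integral_eq_zero (X := id) hmgf hmean hvar
  obtain ⟨N, hN⟩ := eventually_atTop.1 (((hl.eventually hloc).and
    ((by simpa using hl.neg : Tendsto (fun n => -l n) atTop (𝓝 0)).eventually hloc)).and
    (eventually_gt_atTop 0))
  refine ⟨N, fun n hn => ?_⟩
  obtain ⟨⟨hpos, hneg⟩, hn0⟩ := hN n hn
  rcases (hα n).eq_or_lt with h0 | ha
  · simp [← h0]
  have hln : 0 < l n := sqrt_pos.2 (by positivity)
  rw [neg_sq] at hneg
  calc _ ≤ 2 * Gamma (2 * α n + 1) * (l n ^ (-(2 * α n)) * exp (V * l n ^ 2) ^ n) := by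
        simpa using integral_abs_sum_rpow_le_of_mgf_le (ι := Fin n) (X := id) (by positivity)
          hln (hmgf _) (hmgf _) hpos hneg
    _ ≤ 2 * Gamma (2 * α n + 1) * (2 * 2 ^ α n * V ^ α n * n ^ α n) :=
        mul_le_mul_of_nonneg_left (sqrt_rpow_neg_mul_exp_pow_le hvar hn0 ha) (by positivity)
    _ = _ := by ring
end

section
/- Fix a real λ with 0 ≤ λ < 1. For each n, let u₁, …, u_n be i.i.d. uniform on {0, 1, 2}, let N_k = #{j : u_j = k}, and set S₃ = N₀² + N₁² + N₂² − (N₀N₁ + N₀N₂ + N₁N₂). Then for every function D : ℕ → ℕ with D(n)³/n → 0 as n → ∞, there exists N₀ such that for all n ≥ N₀: Σ_{d=0}^{D(n)} (λ^{2d} / (n^d d!)) · E[S₃^d] ≤ 8 · Σ_{d=0}^{∞} d² λ^{2d} + 1, and in particular sup_n Σ_{d=0}^{D(n)} (λ^{2d} / (n^d d!)) · E[S₃^d] < ∞. -/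
/-!
Let `ω` be a primitive cube root of unity and `Z = ∑ⱼ ω ^ uⱼ`; then `S₃ = |Z|²`. Expanding
`|Z| ^ (2d)` and averaging over `u` by orthogonality of the characters of `ℤ/3` gives
`E[S₃ ^ d] = #V(d, d)`, where `V(p, q)` is the set of pairs of words `f : [p] → [n]`,
`g : [q] → [n]` in which every letter occurs equally often modulo 3.

Remove the last letter `v` of `f`: either `v` also occurs in `g` and we remove it there too,
or it does not, and then `v` occurs at least three times in `f` and we remove three copies.
This gives `#V(p+1, q+1) ≤ (q+1) n #V(p, q) + p (p-1) n #V(p-2, q+1)`, and by induction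
`#V(d, d) ≤ d! (n + d²) ^ d ≤ e · d! n ^ d` as soon as `d³ ≤ n`. Hence each term of degree
`d ≥ 1` of the low-degree sum is at most `3 λ ^ (2d)`.
-/

open MeasureTheory Filter

/-- `S₃ = N₀² + N₁² + N₂² − (N₀N₁ + N₀N₂ + N₁N₂)` for the counts of `u`. -/
noncomputable def S3 (n : ℕ) (u : Fin n → Fin 3) : ℝ :=
  (cnt3 n u 0 : ℝ) ^ 2 + (cnt3 n u 1 : ℝ) ^ 2 + (cnt3 n u 2 : ℝ) ^ 2
    - ((cnt3 n u 0 : ℝ) * (cnt3 n u 1 : ℝ) + (cnt3 n u 0 : ℝ) * (cnt3 n u 2 : ℝ)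
        + (cnt3 n u 1 : ℝ) * (cnt3 n u 2 : ℝ))

open Finset
open scoped Nat

namespace LowDegreeZ3

section Words

variable {n p q : ℕ}

def cnt (f : Fin p → Fin n) (x : Fin n) : ℕ := #{i | f i = x}

def BalancedMod3 (f : Fin p → Fin n) (g : Fin q → Fin n) : Prop :=
  ∀ x, cnt f x ≡ cnt g x [MOD 3]

instance (f : Fin p → Fin n) (g : Fin q → Fin n) : Decidable (BalancedMod3 f g) := by
  unfold BalancedMod3; infer_instance

def balancedPairs (p q n : ℕ) : Finset ((Fin p → Fin n) × (Fin q → Fin n)) :=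
  {fg | BalancedMod3 fg.1 fg.2}

lemma mem_balancedPairs {fg : (Fin p → Fin n) × (Fin q → Fin n)} :
    fg ∈ balancedPairs p q n ↔ BalancedMod3 fg.1 fg.2 := by
  simp [balancedPairs]

@[to_additive]
lemma prod_comp_eq_prod_pow_cnt {M : Type*} [CommMonoid M] (f : Fin p → Fin n) (F : Fin n → M) :
    ∏ i, F (f i) = ∏ x, F x ^ cnt f x := by
  rw [← prod_fiberwise univ f (fun i => F (f i))]
  refine prod_congr rfl fun x _ => ?_
  rw [prod_congr rfl fun i hi => by rw [(mem_filter.mp hi).2], prod_const]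
  rfl

lemma balancedMod3_iff_dvd (f : Fin p → Fin n) (g : Fin q → Fin n) :
    BalancedMod3 f g ↔ ∀ x, 3 ∣ cnt f x + 2 * cnt g x := by
  refine forall_congr' fun x => ?_
  rw [Nat.ModEq]
  omega

lemma cnt_le (f : Fin p → Fin n) (x : Fin n) : cnt f x ≤ p :=
  (card_filter_le _ _).trans (by simp)

lemma cnt_insertNth (i : Fin (p + 1)) (v : Fin n) (f : Fin p → Fin n) (x : Fin n) :
    cnt (Fin.insertNth i v f) x = cnt f x + if v = x then 1 else 0 := by
  simp only [cnt, card_filter]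
  rw [Fin.sum_univ_succAbove _ i]
  simp [add_comm]

lemma exists_eq_insertNth {f : Fin (p + 1) → Fin n} {v : Fin n} (h : 0 < cnt f v) :
    ∃ i f', f = Fin.insertNth i v f' := by
  obtain ⟨i, hi⟩ := card_pos.mp h
  obtain rfl : f i = v := (mem_filter.mp hi).2
  exact ⟨i, _, (Fin.insertNth_self_removeNth i f).symm⟩

lemma balancedMod3_insertNth_iff (i : Fin (p + 1)) (j : Fin (q + 1)) (v : Fin n)
    (f : Fin p → Fin n) (g : Fin q → Fin n) :
    BalancedMod3 (Fin.insertNth i v f) (Fin.insertNth j v g) ↔ BalancedMod3 f g := by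
  simp only [BalancedMod3, cnt_insertNth]
  exact forall_congr' fun x => ⟨Nat.ModEq.add_right_cancel' _, (·.add_right _)⟩

lemma balancedMod3_insertNth_three_iff (i : Fin (p + 3)) (j : Fin (p + 2)) (k : Fin (p + 1))
    (v : Fin n) (f : Fin p → Fin n) (g : Fin q → Fin n) :
    BalancedMod3 (Fin.insertNth i v (Fin.insertNth j v (Fin.insertNth k v f))) g ↔
      BalancedMod3 f g := by
  simp only [BalancedMod3, cnt_insertNth, Nat.ModEq]
  refine forall_congr' fun x => ?_
  split_ifs <;> omega

lemma card_balancedPairs_comm (p q n : ℕ) :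
    #(balancedPairs p q n) = #(balancedPairs q p n) :=
  card_equiv (Equiv.prodComm _ _) fun fg => by
    simp only [mem_balancedPairs, BalancedMod3, Equiv.prodComm_apply, Prod.fst_swap,
      Prod.snd_swap]
    exact forall_congr' fun x => ⟨Nat.ModEq.symm, Nat.ModEq.symm⟩

lemma card_balancedPairs_zero_zero (n : ℕ) : #(balancedPairs 0 0 n) = 1 := by
  rw [card_eq_one]
  refine ⟨(Fin.elim0, Fin.elim0), eq_singleton_iff_unique_mem.mpr ⟨?_, fun fg _ => ?_⟩⟩
  · simp [mem_balancedPairs, BalancedMod3, cnt, Nat.ModEq.refl]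
  · ext1 <;> funext i <;> exact i.elim0

lemma card_matched_le (p q n : ℕ) :
    #{fg ∈ balancedPairs (p + 1) (q + 1) n | ∃ j, fg.2 j = fg.1 (Fin.last p)} ≤
      (q + 1) * n * #(balancedPairs p q n) := by
  let glue : Fin (q + 1) × Fin n × (Fin p → Fin n) × (Fin q → Fin n) →
      (Fin (p + 1) → Fin n) × (Fin (q + 1) → Fin n) :=
    fun z => (Fin.insertNth (Fin.last p) z.2.1 z.2.2.1, Fin.insertNth z.1 z.2.1 z.2.2.2)
  calc _ ≤ #(univ ×ˢ univ ×ˢ balancedPairs p q n) := by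
        refine card_le_card_of_surjOn glue ?_
        rintro ⟨f, g⟩ hfg
        simp only [coe_filter, mem_balancedPairs, Set.mem_ofPred_eq] at hfg
        obtain ⟨hbal, j, hj⟩ := hfg
        have hf := Fin.insertNth_self_removeNth (Fin.last p) f
        have hg := Fin.insertNth_self_removeNth j g
        rw [hj] at hg
        refine ⟨(j, f (Fin.last p), Fin.removeNth (Fin.last p) f, Fin.removeNth j g), ?_, ?_⟩
        · simp only [coe_product, coe_univ, Set.mem_prod, Set.mem_univ, true_and, mem_coe,
            mem_balancedPairs]
          rwa [← balancedMod3_insertNth_iff (Fin.last p) j (f (Fin.last p)), hf, hg]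
        · simp only [glue, hf, hg]
    _ = (q + 1) * n * #(balancedPairs p q n) := by simp [card_product, mul_assoc]

lemma three_le_cnt_of_unmatched {f : Fin (p + 1) → Fin n} {g : Fin q → Fin n}
    (hbal : BalancedMod3 f g) (hg : ¬∃ j, g j = f (Fin.last p)) :
    3 ≤ cnt f (f (Fin.last p)) := by
  have hg0 : cnt g (f (Fin.last p)) = 0 := by
    simpa [cnt, filter_eq_empty_iff] using hg
  have hpos : 0 < cnt f (f (Fin.last p)) := card_pos.mpr ⟨Fin.last p, by simp⟩
  have hmod := hbal (f (Fin.last p))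
  rw [hg0, Nat.modEq_zero_iff_dvd] at hmod
  exact Nat.le_of_dvd hpos hmod

lemma unmatched_eq_empty (hp : p < 2) (q n : ℕ) :
    {fg ∈ balancedPairs (p + 1) q n | ¬∃ j, fg.2 j = fg.1 (Fin.last p)} = ∅ := by
  refine filter_false_of_mem fun fg hfg hg => ?_
  have := three_le_cnt_of_unmatched (mem_balancedPairs.mp hfg) hg
  have := cnt_le fg.1 (fg.1 (Fin.last p))
  omega

lemma card_unmatched_le (p q n : ℕ) :
    #{fg ∈ balancedPairs (p + 3) q n | ¬∃ j, fg.2 j = fg.1 (Fin.last (p + 2))} ≤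
      (p + 2) * (p + 1) * n * #(balancedPairs p q n) := by
  let glue : Fin (p + 2) × Fin (p + 1) × Fin n × (Fin p → Fin n) × (Fin q → Fin n) →
      (Fin (p + 3) → Fin n) × (Fin q → Fin n) := fun z =>
    (Fin.insertNth (Fin.last (p + 2)) z.2.2.1
      (Fin.insertNth z.1 z.2.2.1 (Fin.insertNth z.2.1 z.2.2.1 z.2.2.2.1)), z.2.2.2.2)
  calc _ ≤ #(univ ×ˢ univ ×ˢ univ ×ˢ balancedPairs p q n) := by
        refine card_le_card_of_surjOn glue ?_
        rintro ⟨f, g⟩ hfg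
        simp only [coe_filter, mem_balancedPairs, Set.mem_ofPred_eq] at hfg
        obtain ⟨hbal, hg⟩ := hfg
        have h3 := three_le_cnt_of_unmatched hbal hg
        set v := f (Fin.last (p + 2))
        obtain ⟨f₀, hf⟩ : ∃ f₀, Fin.insertNth (Fin.last (p + 2)) v f₀ = f :=
          ⟨_, Fin.insertNth_self_removeNth _ f⟩
        rw [← hf, cnt_insertNth, if_pos rfl] at h3
        obtain ⟨i, f₁, rfl⟩ := exists_eq_insertNth (v := v) (f := f₀) (by omega)
        rw [cnt_insertNth, if_pos rfl] at h3
        obtain ⟨k, f₂, rfl⟩ := exists_eq_insertNth (v := v) (f := f₁) (by omega)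
        refine ⟨(i, k, v, f₂, g), ?_, by simp only [glue, hf]⟩
        simp only [coe_product, coe_univ, Set.mem_prod, Set.mem_univ, true_and, mem_coe,
          mem_balancedPairs]
        rwa [← balancedMod3_insertNth_three_iff (Fin.last (p + 2)) i k v, hf]
    _ = (p + 2) * (p + 1) * n * #(balancedPairs p q n) := by
        simp only [card_product, card_univ, Fintype.card_fin]; ring

-- For `p < 2` the coefficient `p * (p - 1)` vanishes, so the truncated `p - 2` is harmless.
lemma card_balancedPairs_succ_succ_le (p q n : ℕ) :
    #(balancedPairs (p + 1) (q + 1) n) ≤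
      (q + 1) * n * #(balancedPairs p q n) +
        p * (p - 1) * n * #(balancedPairs (p - 2) (q + 1) n) := by
  rw [← card_filter_add_card_filter_not (fun fg => ∃ j, fg.2 j = fg.1 (Fin.last p))]
  refine add_le_add (card_matched_le p q n) ?_
  rcases p with _ | _ | p
  · rw [unmatched_eq_empty (by norm_num)]; simp
  · rw [unmatched_eq_empty (by norm_num)]; simp
  · exact card_unmatched_le p (q + 1) n

lemma card_balancedPairs_zero_three_mul_le (m n : ℕ) :
    #(balancedPairs 0 (3 * m) n) ≤ (3 * m)! * n ^ m := by
  induction m with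
  | zero => simp [card_balancedPairs_zero_zero]
  | succ m ih =>
    have hall : balancedPairs (3 * m + 3) 0 n =
        {fg ∈ balancedPairs (3 * m + 3) 0 n | ¬∃ j, fg.2 j = fg.1 (Fin.last (3 * m + 2))} :=
      (filter_true_of_mem fun fg _ ⟨j, _⟩ => j.elim0).symm
    calc #(balancedPairs 0 (3 * (m + 1)) n)
        = #(balancedPairs (3 * m + 3) 0 n) := card_balancedPairs_comm _ _ _
      _ ≤ (3 * m + 2) * (3 * m + 1) * n * #(balancedPairs 0 (3 * m) n) := by
        rw [hall, card_balancedPairs_comm 0]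
        exact card_unmatched_le _ _ _
      _ ≤ (3 * m + 2) * (3 * m + 1) * n * ((3 * m)! * n ^ m) := by gcongr
      _ ≤ (3 * (m + 1))! * n ^ (m + 1) := by
        rw [show 3 * (m + 1) = 3 * m + 1 + 1 + 1 by ring, Nat.factorial_succ,
          Nat.factorial_succ, Nat.factorial_succ, pow_succ]
        nlinarith [Nat.zero_le ((3 * m + 2) * (3 * m + 1) * (3 * m)! * n ^ m * n)]

end Words

lemma mul_pred_mul_le_sq_mul {p Q n : ℕ} (hp : p < Q) (hQ : Q ^ 3 ≤ n) :
    p * (p - 1) * (n + Q ^ 2) ≤ Q ^ 2 * n := by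
  have hpp : p * (p - 1) ≤ p * p := Nat.mul_le_mul_left _ (Nat.sub_le _ _)
  have hsq : p * p + Q ≤ Q ^ 2 := by nlinarith
  have hQn : Q ^ 4 ≤ Q * n := by nlinarith
  have hpQ : p * p * Q ^ 2 ≤ Q ^ 4 := by nlinarith
  calc p * (p - 1) * (n + Q ^ 2) ≤ p * p * n + p * p * Q ^ 2 := by nlinarith
    _ ≤ Q ^ 2 * n := by nlinarith

-- Heuristically `#(balancedPairs p (p + 3 * m) n) ≈ (p + 3 * m)! * n ^ (p + m)`:
-- `p` letters of `g` are matched with those of `f`, the other `3 * m` come in triples.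
theorem card_balancedPairs_mul_pow_le {n Q : ℕ} (hQ : Q ^ 3 ≤ n) (p m : ℕ)
    (hpm : p + 3 * m ≤ Q) :
    #(balancedPairs p (p + 3 * m) n) * n ^ (2 * m) ≤
      (p + 3 * m)! * (n + Q ^ 2) ^ (p + 3 * m) := by
  induction p using Nat.strong_induction_on generalizing m with
  | _ p ih =>
    set K := n + Q ^ 2
    rcases p with _ | p
    · rw [Nat.zero_add]
      calc #(balancedPairs 0 (3 * m) n) * n ^ (2 * m)
          ≤ (3 * m)! * n ^ m * n ^ (2 * m) := by
            gcongr; exact card_balancedPairs_zero_three_mul_le m n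
        _ = (3 * m)! * n ^ (3 * m) := by ring
        _ ≤ (3 * m)! * K ^ (3 * m) := by gcongr; exact Nat.le_add_right n _
    set q := p + 3 * m
    have hq : p + 1 + 3 * m = q + 1 := by omega
    have hn : 0 < n := lt_of_lt_of_le (pow_pos (by omega : 0 < Q) 3) hQ
    have hmatched := ih p (by omega) m (by omega)
    have hunmatched : p * (p - 1) * (#(balancedPairs (p - 2) (q + 1) n) * n ^ (2 * m + 2)) ≤
        p * (p - 1) * ((q + 1)! * K ^ (q + 1)) := by
      rcases lt_or_ge p 2 with hp | hp
      · interval_cases p <;> simp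
      · have h := ih (p - 2) (by omega) (m + 1) (by omega)
        rw [show 2 * (m + 1) = 2 * m + 2 by ring] at h
        rw [show p - 2 + 3 * (m + 1) = q + 1 by omega] at h
        exact Nat.mul_le_mul_left _ h
    have hcoef : n ^ 2 + p * (p - 1) * K ≤ n * K := by
      have := mul_pred_mul_le_sq_mul (p := p) (by omega : p < Q) hQ
      simp only [K] at this ⊢
      nlinarith
    refine Nat.le_of_mul_le_mul_left ?_ hn
    rw [hq]
    calc n * (#(balancedPairs (p + 1) (q + 1) n) * n ^ (2 * m))
        ≤ n * (((q + 1) * n * #(balancedPairs p q n) +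
            p * (p - 1) * n * #(balancedPairs (p - 2) (q + 1) n)) * n ^ (2 * m)) := by
          gcongr; exact card_balancedPairs_succ_succ_le p q n
      _ = (q + 1) * n ^ 2 * (#(balancedPairs p q n) * n ^ (2 * m)) +
            p * (p - 1) * (#(balancedPairs (p - 2) (q + 1) n) * n ^ (2 * m + 2)) := by ring
      _ ≤ (q + 1) * n ^ 2 * (q ! * K ^ q) + p * (p - 1) * ((q + 1)! * K ^ (q + 1)) := by
          gcongr
      _ = (q + 1)! * K ^ q * (n ^ 2 + p * (p - 1) * K) := by rw [Nat.factorial_succ]; ring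
      _ ≤ (q + 1)! * K ^ q * (n * K) := by gcongr
      _ = n * ((q + 1)! * K ^ (q + 1)) := by ring

lemma card_balancedPairs_diag_le {d n : ℕ} (hd : d ^ 3 ≤ n) :
    (#(balancedPairs d d n) : ℝ) ≤ 3 * (n ^ d * d !) := by
  have hcount : #(balancedPairs d d n) ≤ d ! * (n + d ^ 2) ^ d := by
    simpa using card_balancedPairs_mul_pow_le hd d 0 (by omega)
  have hbase : (n + d ^ 2 : ℝ) ≤ n * (1 + (d : ℝ)⁻¹) := by
    rcases Nat.eq_zero_or_pos d with rfl | hd0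
    · simp
    · rw [mul_one_add, ← div_eq_mul_inv, add_le_add_iff_left, le_div_iff₀ (by positivity)]
      exact_mod_cast (by ring_nf; exact hd : d ^ 2 * d ≤ n)
  have hexp : (1 + (d : ℝ)⁻¹) ^ d ≤ 3 :=
    Real.one_add_inv_pow_le_exp.trans (Real.exp_one_lt_d9.le.trans (by norm_num))
  calc (#(balancedPairs d d n) : ℝ) ≤ d ! * (n + d ^ 2 : ℝ) ^ d := by exact_mod_cast hcount
    _ ≤ d ! * (n ^ d * (1 + (d : ℝ)⁻¹) ^ d) := by rw [← mul_pow]; gcongr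
    _ ≤ d ! * (n ^ d * 3) := by gcongr
    _ = 3 * (n ^ d * d !) := by ring

section CubeRoots

variable {ω : ℂ}

lemma conj_eq_sq (hω : IsPrimitiveRoot ω 3) : starRingEnd ℂ ω = ω ^ 2 := by
  rw [← Complex.inv_eq_conj (hω.norm'_eq_one (by norm_num))]
  exact inv_eq_of_mul_eq_one_right (by rw [← pow_succ']; exact hω.pow_eq_one)

lemma one_add_add_sq_eq_zero (hω : IsPrimitiveRoot ω 3) : 1 + ω + ω ^ 2 = 0 := by
  simpa [sum_range_succ] using hω.geom_sum_eq_zero (by norm_num)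

lemma sum_pow_val_mul (hω : IsPrimitiveRoot ω 3) (c : ℕ) :
    ∑ t : Fin 3, ω ^ ((t : ℕ) * c) = if 3 ∣ c then 3 else 0 := by
  have hgeom : 1 + ω ^ c + (ω ^ c) ^ 2 = if 3 ∣ c then 3 else 0 := by
    split_ifs with h
    · obtain ⟨k, rfl⟩ := h
      rw [pow_mul, hω.pow_eq_one]
      norm_num
    · have hc : Nat.Coprime c 3 :=
        ((Nat.Prime.coprime_iff_not_dvd Nat.prime_three).mpr h).symm
      exact one_add_add_sq_eq_zero (hω.pow_of_coprime c hc)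
  rw [Fin.sum_univ_three, ← hgeom]
  simp [pow_mul']

lemma conj_pow (hω : IsPrimitiveRoot ω 3) (k : ℕ) : starRingEnd ℂ (ω ^ k) = ω ^ (2 * k) := by
  rw [map_pow, conj_eq_sq hω, pow_mul]

lemma S3_eq_mul_conj (hω : IsPrimitiveRoot ω 3) {n : ℕ} (u : Fin n → Fin 3) :
    (S3 n u : ℂ) = (∑ j, ω ^ (u j : ℕ)) * starRingEnd ℂ (∑ j, ω ^ (u j : ℕ)) := by
  have hZ : ∑ j, ω ^ (u j : ℕ) =
      cnt3 n u 0 + cnt3 n u 1 * ω + cnt3 n u 2 * ω ^ 2 := by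
    rw [sum_comp_eq_sum_nsmul_cnt u fun t => ω ^ (t : ℕ), Fin.sum_univ_three]
    simp [cnt3, cnt, nsmul_eq_mul]
  rw [hZ, S3]
  simp only [map_add, map_mul, map_natCast, conj_eq_sq hω, map_pow]
  push_cast
  linear_combination
    (-(cnt3 n u 1 ^ 2 + cnt3 n u 0 * cnt3 n u 2 * ω + cnt3 n u 1 * cnt3 n u 2 * (ω ^ 2 + ω) +
      cnt3 n u 2 ^ 2 * (ω ^ 3 + 1) : ℂ)) * hω.pow_eq_one -
    (cnt3 n u 0 * cnt3 n u 1 + cnt3 n u 0 * cnt3 n u 2 + cnt3 n u 1 * cnt3 n u 2 : ℂ) *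
      one_add_add_sq_eq_zero hω

lemma sum_prod_pow_val_mul (hω : IsPrimitiveRoot ω 3) {n : ℕ} (c : Fin n → ℕ) :
    ∑ u : Fin n → Fin 3, ∏ j, ω ^ ((u j : ℕ) * c j) = if ∀ j, 3 ∣ c j then 3 ^ n else 0 := by
  rw [← Fintype.prod_sum fun j (t : Fin 3) => ω ^ ((t : ℕ) * c j)]
  simp only [sum_pow_val_mul hω, prod_ite_zero, prod_const, card_univ, Fintype.card_fin,
    mem_univ, forall_const]

lemma prod_pow_mul_conj_prod_pow (hω : IsPrimitiveRoot ω 3) {n d : ℕ} (u : Fin n → Fin 3)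
    (f g : Fin d → Fin n) :
    (∏ i, ω ^ (u (f i) : ℕ)) * starRingEnd ℂ (∏ i, ω ^ (u (g i) : ℕ)) =
      ∏ j, ω ^ ((u j : ℕ) * (cnt f j + 2 * cnt g j)) := by
  simp only [map_prod, conj_pow hω]
  rw [prod_comp_eq_prod_pow_cnt f fun j => ω ^ (u j : ℕ),
    prod_comp_eq_prod_pow_cnt g fun j => ω ^ (2 * (u j : ℕ)), ← prod_mul_distrib]
  refine prod_congr rfl fun j _ => ?_
  rw [← pow_mul, ← pow_mul, ← pow_add]
  ring_nf

theorem sum_S3_pow (hω : IsPrimitiveRoot ω 3) (n d : ℕ) :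
    ∑ u : Fin n → Fin 3, (S3 n u : ℂ) ^ d = 3 ^ n * #(balancedPairs d d n) := by
  calc ∑ u : Fin n → Fin 3, (S3 n u : ℂ) ^ d
      = ∑ u : Fin n → Fin 3, ∑ f : Fin d → Fin n, ∑ g : Fin d → Fin n,
          ∏ j, ω ^ ((u j : ℕ) * (cnt f j + 2 * cnt g j)) := by
        refine sum_congr rfl fun u _ => ?_
        rw [S3_eq_mul_conj hω, mul_pow, ← map_pow, Fintype.sum_pow, map_sum, sum_mul_sum]
        exact sum_congr rfl fun f _ => sum_congr rfl fun g _ =>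
          prod_pow_mul_conj_prod_pow hω u f g
    _ = ∑ f : Fin d → Fin n, ∑ g : Fin d → Fin n,
          if BalancedMod3 f g then (3 : ℂ) ^ n else 0 := by
        rw [sum_comm]
        refine sum_congr rfl fun f _ => ?_
        rw [sum_comm]
        refine sum_congr rfl fun g _ => ?_
        rw [sum_prod_pow_val_mul hω]
        exact if_congr (balancedMod3_iff_dvd f g).symm rfl rfl
    _ = 3 ^ n * #(balancedPairs d d n) := by
        rw [← Fintype.sum_prod_type' fun f g => if BalancedMod3 f g then (3 : ℂ) ^ n else 0,
          sum_ite, sum_const_zero, add_zero, sum_const, nsmul_eq_mul, mul_comm]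
        rfl

end CubeRoots

lemma integral_S3_pow (μ3 : Measure (Fin 3)) [IsFiniteMeasure μ3]
    (hμ3 : ∀ k, μ3 {k} = 1 / 3) (n d : ℕ) :
    ∫ u : Fin n → Fin 3, S3 n u ^ d ∂(Measure.pi fun _ => μ3) = #(balancedPairs d d n) := by
  have hsum : ∑ u : Fin n → Fin 3, S3 n u ^ d = 3 ^ n * #(balancedPairs d d n) := by
    exact_mod_cast sum_S3_pow (Complex.isPrimitiveRoot_exp 3 (by norm_num)) n d
  rw [integral_fintype .of_finite]
  simp only [measureReal_def, Measure.pi_singleton, hμ3, prod_const, card_univ,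
    Fintype.card_fin, smul_eq_mul]
  rw [← mul_sum, hsum]
  simp

lemma sum_range_mul_card_balancedPairs_le {lam : ℝ} (hlam0 : 0 ≤ lam) (hlam1 : lam < 1)
    {n D : ℕ} (hD : D ^ 3 ≤ n) :
    ∑ d ∈ range (D + 1), lam ^ (2 * d) / ((n : ℝ) ^ d * d !) * #(balancedPairs d d n) ≤
      8 * (∑' d : ℕ, (d : ℝ) ^ 2 * lam ^ (2 * d)) + 1 := by
  have hsumm : Summable fun d : ℕ => (d : ℝ) ^ 2 * lam ^ (2 * d) := by
    simpa only [pow_mul] using summable_pow_mul_geometric_of_norm_lt_one 2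
      (r := lam ^ 2) (by rw [Real.norm_eq_abs, abs_of_nonneg (by positivity)]; nlinarith)
  have hterm : ∀ d ∈ range D,
      lam ^ (2 * (d + 1)) / ((n : ℝ) ^ (d + 1) * (d + 1)!) *
          #(balancedPairs (d + 1) (d + 1) n) ≤
        8 * (((d + 1 : ℕ) : ℝ) ^ 2 * lam ^ (2 * (d + 1))) := by
    intro d hd
    have hdD : d + 1 ≤ D := mem_range.mp hd
    have hcube : (d + 1) ^ 3 ≤ n := (Nat.pow_le_pow_left hdD 3).trans hD
    have hn : (0 : ℝ) < n := by exact_mod_cast (Nat.one_le_pow _ _ d.succ_pos).trans hcube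
    have hsq : (1 : ℝ) ≤ ((d + 1 : ℕ) : ℝ) ^ 2 := by norm_cast; nlinarith
    calc lam ^ (2 * (d + 1)) / ((n : ℝ) ^ (d + 1) * (d + 1)!) *
          #(balancedPairs (d + 1) (d + 1) n)
        ≤ lam ^ (2 * (d + 1)) / ((n : ℝ) ^ (d + 1) * (d + 1)!) *
            (3 * ((n : ℝ) ^ (d + 1) * (d + 1)!)) := by
          gcongr; exact card_balancedPairs_diag_le hcube
      _ = 3 * lam ^ (2 * (d + 1)) := by field_simp
      _ ≤ 8 * (((d + 1 : ℕ) : ℝ) ^ 2 * lam ^ (2 * (d + 1))) := by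
          nlinarith [pow_nonneg hlam0 (2 * (d + 1))]
  calc ∑ d ∈ range (D + 1), lam ^ (2 * d) / ((n : ℝ) ^ d * d !) * #(balancedPairs d d n)
      = ∑ d ∈ range D, lam ^ (2 * (d + 1)) / ((n : ℝ) ^ (d + 1) * (d + 1)!) *
          #(balancedPairs (d + 1) (d + 1) n) + 1 := by
        rw [sum_range_succ']
        simp [card_balancedPairs_zero_zero]
    _ ≤ 8 * ∑ d ∈ range (D + 1), (d : ℝ) ^ 2 * lam ^ (2 * d) + 1 := by
        rw [sum_range_succ', mul_add, mul_sum]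
        simpa using sum_le_sum hterm
    _ ≤ 8 * (∑' d : ℕ, (d : ℝ) ^ 2 * lam ^ (2 * d)) + 1 := by
        gcongr
        exact hsumm.sum_le_tsum _ fun d _ => by positivity

end LowDegreeZ3

open LowDegreeZ3

/-- **Low-degree hardness for synchronization over a group of order 3.**
For `0 ≤ λ < 1`, with `u₁,…,u_n` i.i.d. uniform on `{0,1,2}` and any `D : ℕ → ℕ`
with `D(n)³/n → 0`, eventually
`∑_{d=0}^{D(n)} (λ^{2d}/(n^d d!)) E[S₃^d] ≤ 8 ∑_{d=0}^∞ d² λ^{2d} + 1`,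
and in particular the left-hand sides are bounded uniformly in `n`. -/
theorem stmt16 (lam : ℝ) (hlam0 : 0 ≤ lam) (hlam1 : lam < 1)
    (μ3 : Measure (Fin 3)) [IsProbabilityMeasure μ3]
    (hμ3 : ∀ k, μ3 {k} = 1 / 3)
    (D : ℕ → ℕ)
    (hD : Tendsto (fun n => (D n : ℝ) ^ 3 / n) atTop (nhds 0)) :
    (∃ N₀ : ℕ, ∀ n ≥ N₀,
      ∑ d ∈ Finset.range (D n + 1),
        lam ^ (2 * d) / ((n : ℝ) ^ d * d.factorial) *
          ∫ u : Fin n → Fin 3, S3 n u ^ d ∂(Measure.pi fun _ => μ3)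
      ≤ 8 * (∑' d : ℕ, (d : ℝ) ^ 2 * lam ^ (2 * d)) + 1) ∧
    (∃ C : ℝ, ∀ n : ℕ,
      ∑ d ∈ Finset.range (D n + 1),
        lam ^ (2 * d) / ((n : ℝ) ^ d * d.factorial) *
          ∫ u : Fin n → Fin 3, S3 n u ^ d ∂(Measure.pi fun _ => μ3)
      ≤ C) := by
  have hcube : ∀ᶠ n in atTop, D n ^ 3 ≤ n := by
    filter_upwards [hD.eventually (gt_mem_nhds one_pos), eventually_gt_atTop 0] with n hlt hn
    rw [div_lt_one (by exact_mod_cast hn)] at hlt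
    exact_mod_cast hlt.le
  simp only [integral_S3_pow μ3 hμ3]
  have hbound := hcube.mono fun n hn => sum_range_mul_card_balancedPairs_le hlam0 hlam1 hn
  refine ⟨eventually_atTop.mp hbound, ?_⟩
  obtain ⟨C, hC⟩ := (isBoundedUnder_of_eventually_le hbound).bddAbove_range
  exact ⟨C, fun n => hC ⟨n, rfl⟩⟩
end
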